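/- arXiv:0812.1135 — 9 statements merged into one kernel-verified Lean document; each statement's English description precedes it below -/
import Mathlib

section
/- For every j ∈ {0,1,…,p} one has the matrix identity Ã G_j = G'_j Ã in M(pn,ℂ). -/
open Matrix

/-- The block matrix `G_j ∈ M(pn,ℂ)`: its `j`-th block row is
`(A_1, …, A_{j-1}, A_j + λI, A_{j+1}, …, A_p)` and all other block rows vanish. -/
noncomputable def Gmat (n p : ℕ) (A : Fin p → Matrix (Fin n) (Fin n) ℂ) (lam : ℂ)
    (j : Fin p) : Matrix (Fin p × Fin n) (Fin p × Fin n) ℂ :=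
  fun x y => if x.1 = j then
    (A y.1 + if y.1 = j then lam • (1 : Matrix (Fin n) (Fin n) ℂ) else 0) x.2 y.2
  else 0

/-- The block matrix `G'_j ∈ M(pn,ℂ)`: its `j`-th block row is
`(A_j, …, A_j, A_j + λI, A_j, …, A_j)` (with `A_j + λI` in block column `j`)
and all other block rows vanish. -/
noncomputable def Gmat' (n p : ℕ) (A : Fin p → Matrix (Fin n) (Fin n) ℂ) (lam : ℂ)
    (j : Fin p) : Matrix (Fin p × Fin n) (Fin p × Fin n) ℂ :=
  fun x y => if x.1 = j then
    (A j + if y.1 = j then lam • (1 : Matrix (Fin n) (Fin n) ℂ) else 0) x.2 y.2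
  else 0

/-- The block-diagonal matrix `Ã = diag(A_1,…,A_p) ∈ M(pn,ℂ)`. -/
noncomputable def Atil (n p : ℕ) (A : Fin p → Matrix (Fin n) (Fin n) ℂ) :
    Matrix (Fin p × Fin n) (Fin p × Fin n) ℂ :=
  fun x y => if x.1 = y.1 then A x.1 x.2 y.2 else 0

/-! Ã is block diagonal and `G_j`, `G'_j` are single block rows, so both products are
block rows with blocks `A_j (A_k + δ_jk λ)` and `(A_j + δ_jk λ) A_k`; these agree because
`A_j` commutes with `A_j + λ`. The case `j = 0` follows by linearity. -/

namespace Matrix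

variable {ι l m n α : Type*} [DecidableEq ι]

/-- Block-diagonal matrix with the block index as the *first* coordinate (`Matrix.blockDiagonal`
puts it second). -/
def blockDiagonalFst [Zero α] (d : ι → Matrix m n α) : Matrix (ι × m) (ι × n) α :=
  fun x y => if x.1 = y.1 then d x.1 x.2 y.2 else 0

def blockRowMatrix [Zero α] (j : ι) (B : ι → Matrix m n α) : Matrix (ι × m) (ι × n) α :=
  fun x y => if x.1 = j then B y.1 x.2 y.2 else 0

variable [Fintype ι] [Fintype m] [NonUnitalNonAssocSemiring α]

theorem blockDiagonalFst_mul_blockRowMatrix (d : ι → Matrix l m α) (j : ι)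
    (B : ι → Matrix m n α) :
    blockDiagonalFst d * blockRowMatrix j B = blockRowMatrix j fun k => d j * B k := by
  ext ⟨a, i⟩ ⟨b, k⟩
  by_cases ha : a = j <;>
    simp [blockDiagonalFst, blockRowMatrix, mul_apply, Fintype.sum_prod_type, ite_mul, ha]

theorem blockRowMatrix_mul_blockDiagonalFst (j : ι) (B : ι → Matrix l m α)
    (d : ι → Matrix m n α) :
    blockRowMatrix j B * blockDiagonalFst d = blockRowMatrix j fun k => B k * d k := by
  ext ⟨a, i⟩ ⟨b, k⟩
  by_cases ha : a = j <;>
    simp [blockDiagonalFst, blockRowMatrix, mul_apply, Fintype.sum_prod_type, mul_ite, ha]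

end Matrix

theorem mul_add_ite_smul_one {𝕜 R ι : Type*} [Semiring R] [SMul 𝕜 R] [IsScalarTower 𝕜 R R]
    [SMulCommClass 𝕜 R R] [DecidableEq ι] (a : ι → R) (c : 𝕜) (j k : ι) :
    a j * (a k + if k = j then c • 1 else 0) = (a j + if k = j then c • 1 else 0) * a k := by
  split_ifs with hkj
  · subst hkj
    simp [mul_add, add_mul]
  · simp

theorem Atil_eq_blockDiagonalFst (n p : ℕ) (A : Fin p → Matrix (Fin n) (Fin n) ℂ) :
    Atil n p A = blockDiagonalFst A := rfl

theorem Gmat_eq_blockRowMatrix (n p : ℕ) (A : Fin p → Matrix (Fin n) (Fin n) ℂ) (lam : ℂ)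
    (j : Fin p) :
    Gmat n p A lam j = blockRowMatrix j fun k => A k + if k = j then lam • 1 else 0 := rfl

theorem Gmat'_eq_blockRowMatrix (n p : ℕ) (A : Fin p → Matrix (Fin n) (Fin n) ℂ) (lam : ℂ)
    (j : Fin p) :
    Gmat' n p A lam j = blockRowMatrix j fun k => A j + if k = j then lam • 1 else 0 := rfl

theorem Atil_mul_Gmat_eq_Gmat'_mul_Atil (n p : ℕ) (A : Fin p → Matrix (Fin n) (Fin n) ℂ)
    (lam : ℂ) (j : Fin p) : Atil n p A * Gmat n p A lam j = Gmat' n p A lam j * Atil n p A := by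
  rw [Atil_eq_blockDiagonalFst, Gmat_eq_blockRowMatrix, Gmat'_eq_blockRowMatrix,
    blockDiagonalFst_mul_blockRowMatrix, blockRowMatrix_mul_blockDiagonalFst]
  simp_rw [mul_add_ite_smul_one]

/-- `Ã G_j = G'_j Ã` for `j = 1,…,p`, and also for `j = 0` where
`G_0 := −(G_1+⋯+G_p)` and `G'_0 := −(G'_1+⋯+G'_p)`. -/
theorem stmt_2 (n p : ℕ) (A : Fin p → Matrix (Fin n) (Fin n) ℂ) (lam : ℂ) :
    (∀ j : Fin p, Atil n p A * Gmat n p A lam j = Gmat' n p A lam j * Atil n p A) ∧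
    Atil n p A * (-(∑ j, Gmat n p A lam j)) = (-(∑ j, Gmat' n p A lam j)) * Atil n p A := by
  refine ⟨Atil_mul_Gmat_eq_Gmat'_mul_Atil n p A lam, ?_⟩
  simp only [Matrix.mul_neg, Matrix.neg_mul, Matrix.mul_sum, Matrix.sum_mul,
    Atil_mul_Gmat_eq_Gmat'_mul_Atil]
end

section
/- For every j ∈ {0,1,…,p} the subspace Im Ã of ℂ^{pn} is invariant under G'_j, i.e. G'_j(Im Ã) ⊆ Im Ã; moreover ker G'_0 = ⋂_{j=1}^p ker G'_j. -/
open Matrix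
/-! The key identity is `G'_j Ã = Ã G_j`: both sides have `j`-th block row
`A_j A_1, …, A_j (A_j + λ), …, A_j A_p`. Hence `G'_j (Ã v) = Ã (G_j v)`, and likewise
`G'_0 Ã = Ã G_0`, so `Im Ã` is invariant. For the kernels, `G'_j` vanishes outside block row `j`,
so block row `j` of `G'_0 u` is minus block row `j` of `G'_j u`. -/

namespace Matrix

variable {R : Type*}

theorem map_mulVecLin_range_le_of_mul_eq [CommSemiring R] {m n : Type*} [Fintype m] [Fintype n]
    {M : Matrix m m R} {B : Matrix m n R} {N : Matrix n n R} (h : M * B = B * N) :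
    Submodule.map M.mulVecLin (LinearMap.range B.mulVecLin) ≤ LinearMap.range B.mulVecLin := by
  rintro _ ⟨_, ⟨v, rfl⟩, rfl⟩
  exact ⟨N *ᵥ v, by simp only [mulVecLin_apply, mulVec_mulVec, h]⟩

theorem ker_mulVecLin_neg [CommRing R] {m n : Type*} [Fintype n] (M : Matrix m n R) :
    LinearMap.ker (-M).mulVecLin = LinearMap.ker M.mulVecLin := by
  ext u
  simp only [LinearMap.mem_ker, mulVecLin_apply, neg_mulVec, neg_eq_zero]

theorem ker_mulVecLin_sum_of_rows_disjoint [CommSemiring R] {ι m n : Type*} [Fintype ι] [Fintype n]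
    (r : m → ι) (M : ι → Matrix m n R) (hM : ∀ j x y, r x ≠ j → M j x y = 0) :
    LinearMap.ker (∑ j, M j).mulVecLin = ⨅ j, LinearMap.ker (M j).mulVecLin := by
  have row_zero : ∀ j x (u : n → R), r x ≠ j → (M j *ᵥ u) x = 0 := fun j x u hx => by
    simp [mulVec, dotProduct, hM j x _ hx]
  have sum_apply : ∀ (u : n → R) x, ((∑ j, M j) *ᵥ u) x = (M (r x) *ᵥ u) x := fun u x => by
    rw [sum_mulVec, Finset.sum_apply, Finset.sum_eq_single (r x)]
    · exact fun j _ hj => row_zero j x u (Ne.symm hj)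
    · simp
  ext u
  simp only [LinearMap.mem_ker, Submodule.mem_iInf, mulVecLin_apply]
  constructor
  · intro h j
    funext x
    by_cases hx : r x = j
    · rw [← hx, ← sum_apply, h, Pi.zero_apply]
    · exact row_zero j x u hx
  · intro h
    funext x
    rw [sum_apply, h]

end Matrix

section BlockMatrices

variable {n p : ℕ} (A : Fin p → Matrix (Fin n) (Fin n) ℂ)

theorem mul_Atil_apply (M : Matrix (Fin p × Fin n) (Fin p × Fin n) ℂ) (x y : Fin p × Fin n) :
    (M * Atil n p A) x y = ∑ i, M x (y.1, i) * A y.1 i y.2 := by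
  simp only [mul_apply, Atil, Fintype.sum_prod_type]
  rw [Finset.sum_eq_single y.1]
  · simp
  · intro k _ hk
    simp [hk]
  · simp

theorem Atil_mul_apply (M : Matrix (Fin p × Fin n) (Fin p × Fin n) ℂ) (x y : Fin p × Fin n) :
    (Atil n p A * M) x y = ∑ i, A x.1 x.2 i * M (x.1, i) y := by
  simp only [mul_apply, Atil, Fintype.sum_prod_type]
  rw [Finset.sum_eq_single x.1]
  · simp
  · intro k _ hk
    simp [Ne.symm hk]
  · simp

theorem Gmat'_mul_Atil (lam : ℂ) (j : Fin p) :
    Gmat' n p A lam j * Atil n p A = Atil n p A * Gmat n p A lam j := by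
  ext x y
  by_cases hx : x.1 = j
  · set c : Matrix (Fin n) (Fin n) ℂ := if y.1 = j then lam • 1 else 0 with hc
    have lhs : (Gmat' n p A lam j * Atil n p A) x y = ((A j + c) * A y.1) x.2 y.2 := by
      rw [mul_Atil_apply]
      simp only [Gmat', hx, if_true]
      rfl
    have rhs : (Atil n p A * Gmat n p A lam j) x y = (A j * (A y.1 + c)) x.2 y.2 := by
      rw [Atil_mul_apply]
      simp only [Gmat, hx, if_true]
      rfl
    rw [lhs, rhs, hc]
    split_ifs with hy
    · rw [hy, add_mul, mul_add, smul_mul, mul_smul_comm, one_mul, mul_one]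
    · rw [add_zero, add_zero]
  · simp [mul_Atil_apply, Atil_mul_apply, Gmat', Gmat, hx]

end BlockMatrices

/-- For `j = 0,1,…,p` the subspace `Im Ã ⊆ ℂ^{pn}` is invariant under
`G'_j`, and `ker G'_0 = ⋂_{j=1}^p ker G'_j`, where `G'_0 := −(G'_1+⋯+G'_p)`. -/
theorem stmt_3 (n p : ℕ) (A : Fin p → Matrix (Fin n) (Fin n) ℂ) (lam : ℂ) :
    (∀ j : Fin p,
      Submodule.map (Gmat' n p A lam j).mulVecLin
          (LinearMap.range (Atil n p A).mulVecLin) ≤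
        LinearMap.range (Atil n p A).mulVecLin) ∧
    (Submodule.map (-(∑ j, Gmat' n p A lam j)).mulVecLin
        (LinearMap.range (Atil n p A).mulVecLin) ≤
      LinearMap.range (Atil n p A).mulVecLin) ∧
    LinearMap.ker (-(∑ j, Gmat' n p A lam j)).mulVecLin =
      ⨅ j : Fin p, LinearMap.ker (Gmat' n p A lam j).mulVecLin := by
  have sum_mul_Atil : -(∑ j, Gmat' n p A lam j) * Atil n p A =
      Atil n p A * -(∑ j, Gmat n p A lam j) := by
    simp only [neg_mul, mul_neg, Finset.sum_mul, Finset.mul_sum, Gmat'_mul_Atil]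
  refine ⟨fun j => map_mulVecLin_range_le_of_mul_eq (Gmat'_mul_Atil A lam j),
    map_mulVecLin_range_le_of_mul_eq sum_mul_Atil, ?_⟩
  rw [ker_mulVecLin_neg]
  exact ker_mulVecLin_sum_of_rows_disjoint Prod.fst _ fun j x y hx => if_neg hx
end

section
/- Assume λ ≠ 0. Then Ã(K + L_λ) = ker G'_0, and ker G'_0 ⊆ Im Ã. -/
open Matrix

/-! Summing the block rows gives `∑ G_j = J Ã + λ` and `∑ G'_j = Ã J + λ`, where `J` is the block
matrix all of whose blocks are `I_n`. For linear maps `f : V → W`, `g : W → V` and a unit `c`, `f`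
maps `ker (g f + c)` onto `ker (f g + c)`: a preimage of `v` is `-c⁻¹ g v`. With `f = Ã` and `g = J`
this is `Ã L_λ = ker G'_0`, and `Ã K = 0`. -/

namespace LinearMap

variable {R V W : Type*} [CommRing R] [AddCommGroup V] [Module R V] [AddCommGroup W] [Module R W]

theorem map_sup_ker_left (f : V →ₗ[R] W) (S : Submodule R V) : (ker f ⊔ S).map f = S.map f := by
  rw [Submodule.map_sup, le_ker_iff_map.mp le_rfl, bot_sup_eq]

theorem map_ker_comp_add_smul_le (f : V →ₗ[R] W) (g : W →ₗ[R] V) (c : R) :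
    (ker (g ∘ₗ f + c • id)).map f ≤ ker (f ∘ₗ g + c • id) := by
  rintro _ ⟨u, hu, rfl⟩
  simp only [SetLike.mem_coe, mem_ker, add_apply, comp_apply, smul_apply, id_apply] at hu ⊢
  rw [← map_smul, ← map_add, hu, map_zero]

theorem ker_comp_add_smul_le_map (f : V →ₗ[R] W) (g : W →ₗ[R] V) {c : R} (hc : IsUnit c) :
    ker (f ∘ₗ g + c • id) ≤ (ker (g ∘ₗ f + c • id)).map f := by
  obtain ⟨d, hdc⟩ := hc.exists_left_inv
  intro v hv
  rw [mem_ker, add_apply, comp_apply, smul_apply, id_apply, add_eq_zero_iff_eq_neg] at hv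
  have hfu : f (-(d • g v)) = v := by
    rw [map_neg, map_smul, hv, smul_neg, neg_neg, smul_smul, hdc, one_smul]
  refine ⟨-(d • g v), ?_, hfu⟩
  rw [SetLike.mem_coe, mem_ker, add_apply, comp_apply, smul_apply, id_apply, hfu, smul_neg,
    smul_smul, mul_comm, hdc, one_smul, add_neg_cancel]

theorem map_ker_comp_add_smul (f : V →ₗ[R] W) (g : W →ₗ[R] V) {c : R} (hc : IsUnit c) :
    (ker (g ∘ₗ f + c • id)).map f = ker (f ∘ₗ g + c • id) :=
  (map_ker_comp_add_smul_le f g c).antisymm (ker_comp_add_smul_le_map f g hc)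

end LinearMap

open Kronecker

/-- `J = 𝟙𝟙ᵀ ⊗ I_n`: `J u` has the block sum `u_1 + ⋯ + u_p` in every block. -/
noncomputable def blockOnes (n p : ℕ) : Matrix (Fin p × Fin n) (Fin p × Fin n) ℂ :=
  Matrix.of (fun _ _ => 1) ⊗ₖ 1

theorem sum_Gmat (n p : ℕ) (A : Fin p → Matrix (Fin n) (Fin n) ℂ) (lam : ℂ) :
    ∑ j, Gmat n p A lam j = blockOnes n p * Atil n p A + lam • 1 := by
  ext ⟨j, i⟩ ⟨k, l⟩
  simp [Gmat, Atil, blockOnes, Matrix.mul_apply, Matrix.sum_apply, Matrix.one_apply,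
    Fintype.sum_prod_type, ite_and, eq_comm, apply_ite (fun M : Matrix (Fin n) (Fin n) ℂ => M i l)]

theorem sum_Gmat' (n p : ℕ) (A : Fin p → Matrix (Fin n) (Fin n) ℂ) (lam : ℂ) :
    ∑ j, Gmat' n p A lam j = Atil n p A * blockOnes n p + lam • 1 := by
  ext ⟨j, i⟩ ⟨k, l⟩
  simp [Gmat', Atil, blockOnes, Matrix.mul_apply, Matrix.sum_apply, Matrix.one_apply,
    Fintype.sum_prod_type, ite_and, eq_comm, apply_ite (fun M : Matrix (Fin n) (Fin n) ℂ => M i l)]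

/-- If `λ ≠ 0` then `Ã(K + L_λ) = ker G'_0 ⊆ Im Ã`, where
`K = ker Ã`, `L_λ = ker(G_1+⋯+G_p)` and `G'_0 = −(G'_1+⋯+G'_p)`. -/
theorem stmt_4 (n p : ℕ) (A : Fin p → Matrix (Fin n) (Fin n) ℂ) (lam : ℂ)
    (hlam : lam ≠ 0) :
    Submodule.map (Atil n p A).mulVecLin
        (LinearMap.ker (Atil n p A).mulVecLin ⊔
          LinearMap.ker (∑ j, Gmat n p A lam j).mulVecLin) =
      LinearMap.ker (-(∑ j, Gmat' n p A lam j)).mulVecLin ∧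
    LinearMap.ker (-(∑ j, Gmat' n p A lam j)).mulVecLin ≤
      LinearMap.range (Atil n p A).mulVecLin := by
  have hmap := LinearMap.map_ker_comp_add_smul (Atil n p A).mulVecLin (blockOnes n p).mulVecLin
    (isUnit_iff_ne_zero.mpr hlam)
  simp only [LinearMap.map_sup_ker_left, sum_Gmat, sum_Gmat', map_neg, LinearMap.ker_neg, map_add,
    map_smul, Matrix.mulVecLin_mul, Matrix.mulVecLin_one]
  exact ⟨hmap, hmap ▸ LinearMap.map_le_range⟩
end

section
/- Assume λ ≠ 0. Then the subspace K + L_λ is invariant under each G_j (j = 1,…,p), the subspaces Im Ã and ker G'_0 ⊆ Im Ã are invariant under each G'_j (j = 1,…,p), and the linear map induced by Ã is a well-defined linear isomorphism φ from the quotient space ℂ^{pn}/(K + L_λ) onto the quotient space (Im Ã)/(ker G'_0) satisfying φ ∘ Ḡ_j = Ḡ'_j ∘ φ for every j = 1,…,p, where Ḡ_j and Ḡ'_j denote the endomorphisms induced by G_j and G'_j on the respective quotients. In particular, the middle convolution mc_λ(A_1,…,A_p) = (Ḡ_1,…,Ḡ_p) is equivalent to the tuple (Ḡ'_1,…,Ḡ'_p).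 -/
/-!
The block-diagonal `Ã` intertwines `G_j` with `G'_j`, i.e. `Ã G_j = G'_j Ã`, hence
`Ã (∑ G_k) = (∑ G'_k) Ã`. Since `∑ G_k` acts as `λ` on `ker Ã`, this identifies `K + L_λ` with
`Ã⁻¹(ker G'_0)`, so `Ã` induces an isomorphism `ℂ^{pn}/(K + L_λ) ≃ Im Ã/(ker G'_0 ∩ Im Ã)`
compatible with the `G_j` and `G'_j`. The `j`-th block row of `G'_0` is minus that of `G'_j`,
so `ker G'_0 ⊆ ker G'_j`, which gives the invariance of `ker G'_0`. For `λ ≠ 0`, a vector of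
`ker G'_0` is the image under `Ã` of a constant block vector, so `ker G'_0 ⊆ Im Ã`.
-/

open Matrix

open LinearMap Submodule

section QuotientComap

variable {R V W : Type*} [Ring R] [AddCommGroup V] [Module R V] [AddCommGroup W] [Module R W]
  (T : V →ₗ[R] W) (N : Submodule R W)

lemma LinearMap.ker_mkQ_comp_rangeRestrict :
    ker ((N.comap (range T).subtype).mkQ ∘ₗ T.rangeRestrict) = N.comap T := by
  ext x
  simp [Submodule.Quotient.mk_eq_zero]

/-- The quotient on the left is by any `P` equal to `T⁻¹(N)`, so that `P` keeps its own
description (in the application, `ker Ã ⊔ L_λ`). -/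
noncomputable def LinearMap.quotEquivOfEqComap {P : Submodule R V} (hP : P = N.comap T) :
    (V ⧸ P) ≃ₗ[R] (range T ⧸ N.comap (range T).subtype) :=
  (P.quotEquivOfEq _ (hP.trans (T.ker_mkQ_comp_rangeRestrict N).symm)).trans
    (LinearMap.quotKerEquivOfSurjective _
      ((N.comap (range T).subtype).mkQ_surjective.comp T.surjective_rangeRestrict))

variable {T N} {P : Submodule R V} (hP : P = N.comap T)

lemma LinearMap.quotEquivOfEqComap_mk (x : V) :
    T.quotEquivOfEqComap N hP (Submodule.Quotient.mk x) =
      Submodule.Quotient.mk ⟨T x, mem_range_self T x⟩ :=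
  rfl

variable {F : V →ₗ[R] V} {F' : W →ₗ[R] W}

lemma LinearMap.comap_le_comap_comap_of_comp_eq (hFF : T ∘ₗ F = F' ∘ₗ T)
    (hN : N ≤ N.comap F') : N.comap T ≤ (N.comap T).comap F := by
  intro x hx
  change T (F x) ∈ N
  rw [← comp_apply, hFF]
  exact hN hx

lemma LinearMap.mapsTo_range_of_comp_eq (hFF : T ∘ₗ F = F' ∘ₗ T) :
    ∀ x ∈ range T, F' x ∈ range T := by
  rintro _ ⟨u, rfl⟩
  exact ⟨F u, by rw [← comp_apply, hFF, comp_apply]⟩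

lemma Submodule.comap_subtype_le_comap_restrict {Q : Submodule R W} (hQ : ∀ x ∈ Q, F' x ∈ Q)
    (hN : N ≤ N.comap F') :
    N.comap Q.subtype ≤ (N.comap Q.subtype).comap (F'.restrict hQ) :=
  fun _ hx => hN hx

lemma LinearMap.quotEquivOfEqComap_comp_mapQ (hFF : T ∘ₗ F = F' ∘ₗ T) (hPF : P ≤ P.comap F)
    (hW : ∀ x ∈ range T, F' x ∈ range T)
    (hNF : N.comap (range T).subtype ≤ (N.comap (range T).subtype).comap (F'.restrict hW)) :
    (T.quotEquivOfEqComap N hP).toLinearMap ∘ₗ P.mapQ P F hPF =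
      mapQ _ _ (F'.restrict hW) hNF ∘ₗ (T.quotEquivOfEqComap N hP).toLinearMap := by
  ext x
  simp only [comp_apply, mkQ_apply, mapQ_apply, LinearEquiv.coe_coe, quotEquivOfEqComap_mk]
  congr 1
  exact Subtype.ext (LinearMap.congr_fun hFF x)

end QuotientComap

section KerSupKer

variable {K V W : Type*} [Field K] [AddCommGroup V] [Module K V] [AddCommGroup W] [Module K W]

/-- If `T x ∈ ker S'` then `S x ∈ ker T`, and `x = c⁻¹ • S x + (x - c⁻¹ • S x)`. -/
lemma LinearMap.ker_sup_ker_eq_comap_ker {T : V →ₗ[K] W} {S : V →ₗ[K] V} {S' : W →ₗ[K] W}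
    {c : K} (hc : c ≠ 0) (hS : S' ∘ₗ T = -(T ∘ₗ S)) (hT : ∀ w ∈ ker T, S w = c • w) :
    ker T ⊔ ker S = (ker S').comap T := by
  have hS' x : S' (T x) = -T (S x) := LinearMap.congr_fun hS x
  refine le_antisymm (sup_le (ker_le_comap T) fun x hx => ?_) fun x hx => ?_
  · rw [mem_comap, mem_ker, hS', mem_ker.1 hx, map_zero, neg_zero]
  · have hSx : S x ∈ ker T := by
      rw [mem_comap, mem_ker, hS', neg_eq_zero] at hx
      exact hx
    refine mem_sup.2 ⟨c⁻¹ • S x, smul_mem _ _ hSx, x - c⁻¹ • S x, ?_, add_sub_cancel _ _⟩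
    rw [mem_ker, map_sub, map_smul, hT _ hSx, smul_smul, inv_mul_cancel₀ hc, one_smul, sub_self]

end KerSupKer

open Function

section Blocks

variable {n p : ℕ} (A : Fin p → Matrix (Fin n) (Fin n) ℂ) (lam : ℂ)

lemma curry_Atil_mulVec (v : Fin p × Fin n → ℂ) (i : Fin p) :
    curry (Atil n p A *ᵥ v) i = A i *ᵥ curry v i := by
  ext a
  simp [Atil, mulVec, dotProduct, Fintype.sum_prod_type, curry]

lemma curry_Gmat_mulVec (j : Fin p) (v : Fin p × Fin n → ℂ) (i : Fin p) :
    curry (Gmat n p A lam j *ᵥ v) i =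
      if i = j then ∑ k, A k *ᵥ curry v k + lam • curry v j else 0 := by
  ext a
  split_ifs with h
  · subst h
    simp [Gmat, mulVec, dotProduct, Fintype.sum_prod_type, curry, add_mul,
      Finset.sum_add_distrib, Matrix.ite_apply, Matrix.one_apply, ite_mul, mul_ite,
      Finset.sum_apply]
  · simp [Gmat, mulVec, curry, h]

lemma curry_Gmat'_mulVec (j : Fin p) (v : Fin p × Fin n → ℂ) (i : Fin p) :
    curry (Gmat' n p A lam j *ᵥ v) i =
      if i = j then A j *ᵥ ∑ k, curry v k + lam • curry v j else 0 := by
  ext a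
  split_ifs with h
  · subst h
    simp [Gmat', mulVec, dotProduct, Fintype.sum_prod_type, curry, add_mul,
      Finset.sum_add_distrib, Matrix.ite_apply, Matrix.one_apply, ite_mul, mul_ite,
      Finset.sum_apply, Finset.mul_sum]
    rw [Finset.sum_comm]
  · simp [Gmat', mulVec, curry, h]

lemma curry_sum_Gmat_mulVec (v : Fin p × Fin n → ℂ) (i : Fin p) :
    curry ((∑ k, Gmat n p A lam k) *ᵥ v) i = ∑ k, A k *ᵥ curry v k + lam • curry v i := by
  ext a
  rw [curry_apply, sum_mulVec, Finset.sum_apply]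
  change ∑ k, curry (Gmat n p A lam k *ᵥ v) i a = _
  simp only [curry_Gmat_mulVec, ite_apply]
  simp

lemma curry_sum_Gmat'_mulVec (v : Fin p × Fin n → ℂ) (i : Fin p) :
    curry ((∑ k, Gmat' n p A lam k) *ᵥ v) i = A i *ᵥ ∑ k, curry v k + lam • curry v i := by
  ext a
  rw [curry_apply, sum_mulVec, Finset.sum_apply]
  change ∑ k, curry (Gmat' n p A lam k *ᵥ v) i a = _
  simp only [curry_Gmat'_mulVec, ite_apply]
  simp

lemma Atil_mul_Gmat (j : Fin p) :
    Atil n p A * Gmat n p A lam j = Gmat' n p A lam j * Atil n p A := by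
  refine mulVec_injective (funext fun v => curry_injective (funext fun i => ?_))
  simp only [← mulVec_mulVec, curry_Atil_mulVec, curry_Gmat_mulVec, curry_Gmat'_mulVec]
  split_ifs with h
  · subst h
    simp [mulVec_add, mulVec_smul, mulVec_sum]
  · simp

lemma Atil_mul_sum_Gmat :
    Atil n p A * ∑ k, Gmat n p A lam k = (∑ k, Gmat' n p A lam k) * Atil n p A := by
  simp only [Finset.mul_sum, Finset.sum_mul, Atil_mul_Gmat]

lemma neg_sum_Gmat'_mulVecLin_comp_Atil :
    (-(∑ k, Gmat' n p A lam k)).mulVecLin ∘ₗ (Atil n p A).mulVecLin =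
      -((Atil n p A).mulVecLin ∘ₗ (∑ k, Gmat n p A lam k).mulVecLin) := by
  refine LinearMap.ext fun v => ?_
  simp only [LinearMap.comp_apply, LinearMap.neg_apply, mulVecLin_apply, mulVec_mulVec,
    neg_mul, neg_mulVec, Atil_mul_sum_Gmat]

lemma mem_ker_neg_sum_Gmat'_iff (y : Fin p × Fin n → ℂ) :
    y ∈ LinearMap.ker (-(∑ k, Gmat' n p A lam k)).mulVecLin ↔
      ∀ i, A i *ᵥ ∑ k, curry y k + lam • curry y i = 0 := by
  rw [LinearMap.mem_ker, mulVecLin_apply, neg_mulVec, neg_eq_zero, ← curry_injective.eq_iff,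
    funext_iff]
  simp only [curry_sum_Gmat'_mulVec]
  rfl

lemma ker_neg_sum_Gmat'_le_ker_Gmat' (j : Fin p) :
    LinearMap.ker (-(∑ k, Gmat' n p A lam k)).mulVecLin ≤
      LinearMap.ker (Gmat' n p A lam j).mulVecLin := by
  intro y hy
  rw [mem_ker_neg_sum_Gmat'_iff] at hy
  rw [LinearMap.mem_ker, mulVecLin_apply, ← curry_injective.eq_iff]
  ext i : 1
  rw [curry_Gmat'_mulVec]
  split_ifs with h
  · exact hy j
  · rfl

/-- The preimage is the constant block vector `u_i = -λ⁻¹ ∑_k y_k`. -/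
lemma ker_neg_sum_Gmat'_le_range_Atil (hlam : lam ≠ 0) :
    LinearMap.ker (-(∑ k, Gmat' n p A lam k)).mulVecLin ≤
      LinearMap.range (Atil n p A).mulVecLin := by
  intro y hy
  rw [mem_ker_neg_sum_Gmat'_iff] at hy
  refine ⟨uncurry fun _ => -lam⁻¹ • ∑ k, curry y k, curry_injective (funext fun i => ?_)⟩
  rw [mulVecLin_apply, curry_Atil_mulVec, curry_uncurry, mulVec_smul,
    eq_neg_of_add_eq_zero_left (hy i), smul_neg, neg_smul, neg_neg, smul_smul,
    inv_mul_cancel₀ hlam, one_smul]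

lemma sum_Gmat_mulVecLin_of_mem_ker_Atil (w : Fin p × Fin n → ℂ)
    (hw : w ∈ LinearMap.ker (Atil n p A).mulVecLin) :
    (∑ k, Gmat n p A lam k).mulVecLin w = lam • w := by
  rw [LinearMap.mem_ker, mulVecLin_apply, ← curry_injective.eq_iff] at hw
  refine curry_injective (funext fun i => ?_)
  have hblock k : A k *ᵥ curry w k = 0 := by
    rw [← curry_Atil_mulVec, hw]
    rfl
  rw [mulVecLin_apply, curry_sum_Gmat_mulVec]
  simp only [hblock, Finset.sum_const_zero, zero_add]
  rfl

end Blocks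

/-- For `λ ≠ 0`: the subspace `K + L_λ` is invariant under each `G_j`,
`Im Ã` and `ker G'_0 ⊆ Im Ã` are invariant under each `G'_j`, and the map induced by `Ã`
is a well-defined linear isomorphism `φ : ℂ^{pn}/(K + L_λ) ≃ (Im Ã)/(ker G'_0)` with
`φ ∘ Ḡ_j = Ḡ'_j ∘ φ` for all `j`; i.e. `mc_λ(A) = (Ḡ_1,…,Ḡ_p)` is equivalent to
`(Ḡ'_1,…,Ḡ'_p)`. -/
theorem stmt_5 (n p : ℕ) (A : Fin p → Matrix (Fin n) (Fin n) ℂ) (lam : ℂ)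
    (hlam : lam ≠ 0) :
    ∃ (hG : ∀ j : Fin p,
        LinearMap.ker (Atil n p A).mulVecLin ⊔
            LinearMap.ker (∑ k, Gmat n p A lam k).mulVecLin ≤
          Submodule.comap (Gmat n p A lam j).mulVecLin
            (LinearMap.ker (Atil n p A).mulVecLin ⊔
              LinearMap.ker (∑ k, Gmat n p A lam k).mulVecLin))
      (hW : ∀ (j : Fin p) (x : Fin p × Fin n → ℂ),
        x ∈ LinearMap.range (Atil n p A).mulVecLin →
          (Gmat' n p A lam j).mulVecLin x ∈ LinearMap.range (Atil n p A).mulVecLin)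
      (hN : ∀ j : Fin p,
        Submodule.comap (LinearMap.range (Atil n p A).mulVecLin).subtype
            (LinearMap.ker (-(∑ k, Gmat' n p A lam k)).mulVecLin) ≤
          Submodule.comap ((Gmat' n p A lam j).mulVecLin.restrict (hW j))
            (Submodule.comap (LinearMap.range (Atil n p A).mulVecLin).subtype
              (LinearMap.ker (-(∑ k, Gmat' n p A lam k)).mulVecLin))),
      (LinearMap.ker (-(∑ k, Gmat' n p A lam k)).mulVecLin ≤
        LinearMap.range (Atil n p A).mulVecLin) ∧
      ∃ φ : ((Fin p × Fin n → ℂ) ⧸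
              (LinearMap.ker (Atil n p A).mulVecLin ⊔
                LinearMap.ker (∑ k, Gmat n p A lam k).mulVecLin)) ≃ₗ[ℂ]
            (LinearMap.range (Atil n p A).mulVecLin ⧸
              Submodule.comap (LinearMap.range (Atil n p A).mulVecLin).subtype
                (LinearMap.ker (-(∑ k, Gmat' n p A lam k)).mulVecLin)),
        (∀ x : Fin p × Fin n → ℂ,
          φ (Submodule.Quotient.mk x) =
            Submodule.Quotient.mk ⟨(Atil n p A).mulVecLin x,
              LinearMap.mem_range_self _ x⟩) ∧
        ∀ j : Fin p,
          φ.toLinearMap ∘ₗ Submodule.mapQ _ _ (Gmat n p A lam j).mulVecLin (hG j) =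
            Submodule.mapQ _ _ ((Gmat' n p A lam j).mulVecLin.restrict (hW j)) (hN j) ∘ₗ
              φ.toLinearMap := by
  have hcomm j : (Atil n p A).mulVecLin ∘ₗ (Gmat n p A lam j).mulVecLin =
      (Gmat' n p A lam j).mulVecLin ∘ₗ (Atil n p A).mulVecLin := by
    rw [← mulVecLin_mul, Atil_mul_Gmat, mulVecLin_mul]
  have hker := ker_sup_ker_eq_comap_ker hlam (neg_sum_Gmat'_mulVecLin_comp_Atil A lam)
    (sum_Gmat_mulVecLin_of_mem_ker_Atil A lam)
  have hNj j : ker (-(∑ k, Gmat' n p A lam k)).mulVecLin ≤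
      (ker (-(∑ k, Gmat' n p A lam k)).mulVecLin).comap (Gmat' n p A lam j).mulVecLin :=
    (ker_neg_sum_Gmat'_le_ker_Gmat' A lam j).trans (ker_le_comap _)
  have hW j := mapsTo_range_of_comp_eq (hcomm j)
  have hN j := comap_subtype_le_comap_restrict (hW j) (hNj j)
  refine ⟨fun j => hker ▸ comap_le_comap_comap_of_comp_eq (hcomm j) (hNj j), hW, hN,
    ker_neg_sum_Gmat'_le_range_Atil A lam hlam, quotEquivOfEqComap _ _ hker,
    quotEquivOfEqComap_mk hker, fun j => quotEquivOfEqComap_comp_mapQ hker (hcomm j) _ _ _⟩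
end

section
/- Assume λ ≠ 0 and that −λ is not an eigenvalue of A_1 + ⋯ + A_p, i.e. det(A_1 + ⋯ + A_p + λI_n) ≠ 0. Then ker G'_0 = {0}, and the linear map induced by Ã is a well-defined linear isomorphism φ from the quotient space ℂ^{pn}/(K + L_λ) onto the subspace Im Ã satisfying φ ∘ Ḡ_j = (G'_j restricted to Im Ã) ∘ φ for every j = 1,…,p; that is, the middle convolution mc_λ(A_1,…,A_p) is equivalent to the tuple of restrictions of G'_1,…,G'_p to Im Ã = Im A_1 ⊕ ⋯ ⊕ Im A_p. -/
open Matrix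

/-!
Write a vector `x` of `ℂ^{pn}` through its blocks `x_l = Function.curry x l ∈ ℂⁿ`. Then
`Ã G_j x` and `G'_j Ã x` both have the single nonzero block `A_j (∑_l A_l x_l + λ x_j)`, in
position `j`; so `Ã G_j = G'_j Ã`, and `Ã` induces an isomorphism `ℂ^{pn} / ker Ã ≃ Im Ã`
intertwining `Ḡ_j` with `G'_j|_{Im Ã}`. It remains to see that `L_λ = 0`, so that `K + L_λ = K`.
If `∑_k G_k x = 0`, every block equals `v = -λ⁻¹ ∑_l A_l x_l`, whence `(∑_l A_l + λ) v = 0` and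
`v = 0`. Likewise, if `∑_k G'_k x = 0` then `A_i s + λ x_i = 0` with `s = ∑_l x_l`; summing over
`i` gives `(∑_l A_l + λ) s = 0`, so `s = 0` and then every `x_i = 0`.
-/

namespace LinearMap

variable {R M N : Type*} [Ring R] [AddCommGroup M] [Module R M] [AddCommGroup N] [Module R N]
  {f : M →ₗ[R] N} {g : M →ₗ[R] M} {g' : N →ₗ[R] N}

theorem ker_le_comap_ker_of_comp_eq (h : f ∘ₗ g = g' ∘ₗ f) : ker f ≤ (ker f).comap g := by
  intro x hx
  simp only [Submodule.mem_comap, mem_ker] at hx ⊢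
  rw [← comp_apply, h, comp_apply, hx, map_zero]

theorem apply_mem_range_of_comp_eq (h : f ∘ₗ g = g' ∘ₗ f) : ∀ y ∈ range f, g' y ∈ range f := by
  rintro _ ⟨x, rfl⟩
  exact ⟨g x, by rw [← comp_apply, h, comp_apply]⟩

theorem quotKerEquivRange_comp_mapQ (h : f ∘ₗ g = g' ∘ₗ f) (hg : ker f ≤ (ker f).comap g)
    (hg' : ∀ y ∈ range f, g' y ∈ range f) :
    f.quotKerEquivRange.toLinearMap ∘ₗ (ker f).mapQ (ker f) g hg =
      g'.restrict hg' ∘ₗ f.quotKerEquivRange.toLinearMap := by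
  refine Submodule.linearMap_qext _ (ext fun x => Subtype.ext ?_)
  simpa using congr($h x)

end LinearMap

theorem Function.curry_sum {ι α β M : Type*} [AddCommMonoid M] (s : Finset ι)
    (f : ι → α × β → M) (a : α) :
    Function.curry (∑ k ∈ s, f k) a = ∑ k ∈ s, Function.curry (f k) a := by
  ext b
  simp [Finset.sum_apply]

theorem Matrix.curry_mulVec {ι κ m o α : Type*} [Fintype κ] [Fintype o]
    [NonUnitalNonAssocSemiring α] (M : Matrix (ι × m) (κ × o) α) (x : κ × o → α) (i : ι) :
    Function.curry (M *ᵥ x) i = ∑ l, of (fun a c => M (i, a) (l, c)) *ᵥ Function.curry x l := by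
  ext a
  simp [mulVec, dotProduct, Fintype.sum_prod_type]

section Blocks

variable {n p : ℕ} (A : Fin p → Matrix (Fin n) (Fin n) ℂ) (lam : ℂ) (x : Fin p × Fin n → ℂ)

theorem atil_block_mulVec (i l : Fin p) (v : Fin n → ℂ) :
    of (fun a c => Atil n p A (i, a) (l, c)) *ᵥ v = if l = i then A i *ᵥ v else 0 := by
  have hblock : of (fun a c => Atil n p A (i, a) (l, c)) = if l = i then A i else 0 := by
    ext a c
    split_ifs with hl
    · simp [Atil, hl]
    · simp [Atil, Ne.symm hl]
  rw [hblock]; split_ifs <;> simp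

theorem gmat_block_mulVec (j i l : Fin p) (v : Fin n → ℂ) :
    of (fun a c => Gmat n p A lam j (i, a) (l, c)) *ᵥ v =
      if i = j then A l *ᵥ v + if l = j then lam • v else 0 else 0 := by
  have hblock : of (fun a c => Gmat n p A lam j (i, a) (l, c)) =
      if i = j then A l + if l = j then lam • 1 else 0 else 0 := by
    ext a c; split_ifs <;> simp [Gmat, *]
  rw [hblock]; split_ifs <;> simp [add_mulVec, smul_mulVec]

theorem gmat'_block_mulVec (j i l : Fin p) (v : Fin n → ℂ) :
    of (fun a c => Gmat' n p A lam j (i, a) (l, c)) *ᵥ v =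
      if i = j then A j *ᵥ v + if l = j then lam • v else 0 else 0 := by
  have hblock : of (fun a c => Gmat' n p A lam j (i, a) (l, c)) =
      if i = j then A j + if l = j then lam • 1 else 0 else 0 := by
    ext a c; split_ifs <;> simp [Gmat', *]
  rw [hblock]; split_ifs <;> simp [add_mulVec, smul_mulVec]

theorem curry_atil_mulVec (i : Fin p) :
    Function.curry (Atil n p A *ᵥ x) i = A i *ᵥ Function.curry x i := by
  simp [curry_mulVec, atil_block_mulVec]

theorem curry_gmat_mulVec (j i : Fin p) :
    Function.curry (Gmat n p A lam j *ᵥ x) i =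
      if i = j then ∑ l, A l *ᵥ Function.curry x l + lam • Function.curry x j else 0 := by
  simp only [curry_mulVec, gmat_block_mulVec]
  split_ifs <;> simp [Finset.sum_add_distrib]

theorem curry_gmat'_mulVec (j i : Fin p) :
    Function.curry (Gmat' n p A lam j *ᵥ x) i =
      if i = j then A j *ᵥ ∑ l, Function.curry x l + lam • Function.curry x j else 0 := by
  simp only [curry_mulVec, gmat'_block_mulVec]
  split_ifs <;> simp [Finset.sum_add_distrib, mulVec_sum]

theorem atil_mulVec_gmat_mulVec (j : Fin p) :
    Atil n p A *ᵥ (Gmat n p A lam j *ᵥ x) = Gmat' n p A lam j *ᵥ (Atil n p A *ᵥ x) := by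
  refine Function.curry_injective (funext fun i => ?_)
  simp only [curry_atil_mulVec, curry_gmat_mulVec, curry_gmat'_mulVec]
  split_ifs with hij
  · subst hij
    simp [mulVec_add, mulVec_sum, mulVec_smul]
  · simp

theorem curry_sum_gmat_mulVec (i : Fin p) :
    Function.curry ((∑ k, Gmat n p A lam k) *ᵥ x) i =
      ∑ l, A l *ᵥ Function.curry x l + lam • Function.curry x i := by
  rw [sum_mulVec, Function.curry_sum]
  simp only [curry_gmat_mulVec, Finset.sum_ite_eq, Finset.mem_univ, if_true]

theorem curry_sum_gmat'_mulVec (i : Fin p) :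
    Function.curry ((∑ k, Gmat' n p A lam k) *ᵥ x) i =
      A i *ᵥ ∑ l, Function.curry x l + lam • Function.curry x i := by
  rw [sum_mulVec, Function.curry_sum]
  simp only [curry_gmat'_mulVec, Finset.sum_ite_eq, Finset.mem_univ, if_true]

end Blocks

section Kernels

variable {n p : ℕ} {A : Fin p → Matrix (Fin n) (Fin n) ℂ} {lam : ℂ}

theorem ker_sum_gmat'_eq_bot (hlam : lam ≠ 0)
    (hdet : ((∑ j, A j) + lam • (1 : Matrix (Fin n) (Fin n) ℂ)).det ≠ 0) :
    LinearMap.ker (∑ k, Gmat' n p A lam k).mulVecLin = ⊥ := by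
  rw [LinearMap.ker_eq_bot']
  intro x hx
  set s := ∑ l, Function.curry x l
  have hblock (i : Fin p) : A i *ᵥ s + lam • Function.curry x i = 0 := by
    rw [← curry_sum_gmat'_mulVec]
    exact congrFun (congrArg Function.curry hx) i
  have hs : s = 0 := by
    refine eq_zero_of_mulVec_eq_zero hdet ?_
    calc ((∑ j, A j) + lam • 1) *ᵥ s = ∑ i, (A i *ᵥ s + lam • Function.curry x i) := by
          simp [add_mulVec, sum_mulVec, smul_mulVec, Finset.sum_add_distrib, ← Finset.smul_sum, s]
      _ = 0 := Finset.sum_eq_zero fun i _ => hblock i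
  have hx_i (i : Fin p) : Function.curry x i = 0 := by simpa [hs, hlam] using hblock i
  exact Function.curry_injective (funext hx_i)

theorem ker_sum_gmat_eq_bot (hlam : lam ≠ 0)
    (hdet : ((∑ j, A j) + lam • (1 : Matrix (Fin n) (Fin n) ℂ)).det ≠ 0) :
    LinearMap.ker (∑ k, Gmat n p A lam k).mulVecLin = ⊥ := by
  rw [LinearMap.ker_eq_bot']
  intro x hx
  set t := ∑ l, A l *ᵥ Function.curry x l
  have hblock (i : Fin p) : Function.curry x i = lam⁻¹ • -t := by
    rw [eq_inv_smul_iff₀ hlam, eq_neg_iff_add_eq_zero, add_comm, ← curry_sum_gmat_mulVec]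
    exact congrFun (congrArg Function.curry hx) i
  have hv : lam⁻¹ • -t = 0 := by
    refine eq_zero_of_mulVec_eq_zero hdet ?_
    calc ((∑ j, A j) + lam • 1) *ᵥ (lam⁻¹ • -t)
        _ = ∑ i, A i *ᵥ Function.curry x i + lam • lam⁻¹ • -t := by
          simp only [add_mulVec, sum_mulVec, smul_mulVec, one_mulVec, hblock]
        _ = 0 := by simp [t, hlam]
  exact Function.curry_injective (funext fun i => (hblock i).trans hv)

end Kernels

/-- If `λ ≠ 0` and `det(A_1+⋯+A_p+λI) ≠ 0`, then `ker G'_0 = 0` and the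
map induced by `Ã` is a linear isomorphism `φ : ℂ^{pn}/(K + L_λ) ≃ Im Ã` intertwining
each induced map `Ḡ_j` with the restriction `G'_j|_{Im Ã}`; i.e. `mc_λ(A_1,…,A_p)` is
equivalent to the tuple of restrictions of `G'_1,…,G'_p` to `Im Ã`. -/
theorem stmt_6 (n p : ℕ) (A : Fin p → Matrix (Fin n) (Fin n) ℂ) (lam : ℂ)
    (hlam : lam ≠ 0)
    (hdet : ((∑ j, A j) + lam • (1 : Matrix (Fin n) (Fin n) ℂ)).det ≠ 0) :
    LinearMap.ker (-(∑ k, Gmat' n p A lam k)).mulVecLin = ⊥ ∧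
    ∃ (hG : ∀ j : Fin p,
        LinearMap.ker (Atil n p A).mulVecLin ⊔
            LinearMap.ker (∑ k, Gmat n p A lam k).mulVecLin ≤
          Submodule.comap (Gmat n p A lam j).mulVecLin
            (LinearMap.ker (Atil n p A).mulVecLin ⊔
              LinearMap.ker (∑ k, Gmat n p A lam k).mulVecLin))
      (hW : ∀ (j : Fin p) (x : Fin p × Fin n → ℂ),
        x ∈ LinearMap.range (Atil n p A).mulVecLin →
          (Gmat' n p A lam j).mulVecLin x ∈ LinearMap.range (Atil n p A).mulVecLin),
      ∃ φ : ((Fin p × Fin n → ℂ) ⧸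
              (LinearMap.ker (Atil n p A).mulVecLin ⊔
                LinearMap.ker (∑ k, Gmat n p A lam k).mulVecLin)) ≃ₗ[ℂ]
            LinearMap.range (Atil n p A).mulVecLin,
        (∀ x : Fin p × Fin n → ℂ,
          φ (Submodule.Quotient.mk x) =
            ⟨(Atil n p A).mulVecLin x, LinearMap.mem_range_self _ x⟩) ∧
        ∀ j : Fin p,
          φ.toLinearMap ∘ₗ Submodule.mapQ _ _ (Gmat n p A lam j).mulVecLin (hG j) =
            ((Gmat' n p A lam j).mulVecLin.restrict (hW j)) ∘ₗ φ.toLinearMap := by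
  have hcomm (j : Fin p) : (Atil n p A).mulVecLin ∘ₗ (Gmat n p A lam j).mulVecLin =
      (Gmat' n p A lam j).mulVecLin ∘ₗ (Atil n p A).mulVecLin :=
    LinearMap.ext (atil_mulVec_gmat_mulVec A lam · j)
  have hneg : (-(∑ k, Gmat' n p A lam k)).mulVecLin = -(∑ k, Gmat' n p A lam k).mulVecLin :=
    LinearMap.ext fun x => neg_mulVec x _
  refine ⟨by rw [hneg, LinearMap.ker_neg, ker_sum_gmat'_eq_bot hlam hdet], ?_⟩
  rw [ker_sum_gmat_eq_bot hlam hdet, sup_bot_eq]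
  exact ⟨fun j => LinearMap.ker_le_comap_ker_of_comp_eq (hcomm j),
    fun j => LinearMap.apply_mem_range_of_comp_eq (hcomm j),
    (Atil n p A).mulVecLin.quotKerEquivRange,
    fun x => Subtype.ext (LinearMap.quotKerEquivRange_apply_mk _ x),
    fun j => LinearMap.quotKerEquivRange_comp_mapQ (hcomm j) _ _⟩
end

section
/- Let A ∈ M(n,ℂ) and set A_j := E_j A for j = 1,…,p. Then the following two pairs of conditions are equivalent: (I) for every i ∈ {1,…,p} and every τ ∈ ℂ, (⋂_{ν≠i} ker A_ν) ∩ ker(A_i + τI_n) = {0} and (∑_{ν≠i} Im A_ν) + Im(A_i + τI_n) = ℂ^n; (II) rank A = n, and for every i ∈ {1,…,p} and every τ ∈ ℂ, rank((A + τI_n)E_i) = n_i and rank(E_i(A + τI_n)) = n_i. -/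
/-!
Everything holds for an arbitrary complete family of orthogonal idempotents `e i` in `End V`.
A vector `x` lies in `(⋂_{ν ≠ i} ker (e ν A)) ∩ ker (e i A + τ)` iff `A x ∈ range (e i)` and
`A x = -τ x`; for `τ ≠ 0` this puts `x` itself in `range (e i)`, so the kernel condition says
that `A` is injective (take `τ = 0`) and that `A + τ` is injective on `range (e i)`. Applying
`e i`, which kills `range (e ν A)` for `ν ≠ i`, maps the sum of ranges onto `range (e i (A + τ))`;
conversely, when `A` is onto, the `range (e ν A) = range (e ν)` for `ν ≠ i` fill out `ker (e i)`.
The rank conditions are these kernel and range equalities counted by dimension.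
-/

open Matrix Module LinearMap Submodule

/-- For the partition `n = n_1 + ⋯ + n_p`, realized by the index type
`Σ i, Fin (n_i)`, the diagonal idempotent `E_i` which is the identity on the rows of the
`i`-th block and zero elsewhere. -/
noncomputable def Eproj (p : ℕ) (nn : Fin p → ℕ) (i : Fin p) :
    Matrix ((j : Fin p) × Fin (nn j)) ((j : Fin p) × Fin (nn j)) ℂ :=
  fun x y => if x = y ∧ x.1 = i then 1 else 0

namespace CompleteOrthogonalIdempotents

section Ring

variable {R M ι : Type*} [Ring R] [AddCommGroup M] [Module R M] [Fintype ι]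
  {e : ι → Module.End R M}

theorem sum_apply (he : CompleteOrthogonalIdempotents e) (x : M) : ∑ j, e j x = x := by
  rw [← LinearMap.sum_apply, he.complete, Module.End.one_apply]

theorem apply_apply_of_ne (he : CompleteOrthogonalIdempotents e) {i j : ι} (hij : i ≠ j)
    (x : M) : e i (e j x) = 0 := by
  rw [← Module.End.mul_apply, he.ortho hij, LinearMap.zero_apply]

theorem apply_apply_self (he : CompleteOrthogonalIdempotents e) (i : ι) (x : M) :
    e i (e i x) = e i x := by
  rw [← Module.End.mul_apply, (he.idem i).eq]

theorem apply_eq_self_iff (he : CompleteOrthogonalIdempotents e) (i : ι) (x : M) :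
    e i x = x ↔ ∀ j ≠ i, e j x = 0 := by
  refine ⟨fun hx j hj => hx ▸ he.apply_apply_of_ne hj x, fun h => ?_⟩
  conv_rhs => rw [← he.sum_apply x]
  exact (Finset.sum_eq_single i (fun j _ hj => h j hj) (by simp)).symm

theorem mem_iSup_range_of_apply_eq_zero (he : CompleteOrthogonalIdempotents e)
    {i : ι} {x : M} (hx : e i x = 0) : x ∈ ⨆ (j) (_ : j ≠ i), range (e j) := by
  classical
  rw [← he.sum_apply x, ← Finset.sum_erase (f := fun j => e j x) Finset.univ hx]
  exact sum_mem fun j hj => mem_iSup_of_mem j <| mem_iSup_of_mem (Finset.ne_of_mem_erase hj) <|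
    mem_range_self _ _

end Ring

section Field

variable {K V ι : Type*} [Field K] [AddCommGroup V] [Module K V] [Fintype ι]
  {e : ι → Module.End K V} {A : Module.End K V} {i : ι} {τ : K}

theorem mem_inf_ker_iff (he : CompleteOrthogonalIdempotents e) {x : V} :
    x ∈ (⨅ (ν) (_ : ν ≠ i), ker (e ν * A)) ⊓ ker (e i * A + τ • 1) ↔
      e i (A x) = A x ∧ A x + τ • x = 0 := by
  simp only [mem_inf, mem_iInf, mem_ker, Module.End.mul_apply, LinearMap.add_apply,
    LinearMap.smul_apply, Module.End.one_apply, ← he.apply_eq_self_iff]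
  exact and_congr_right fun h => by rw [h]

theorem ker_eq_bot_of_inf_ker_eq_bot (he : CompleteOrthogonalIdempotents e)
    (h : ∀ i, (⨅ (ν) (_ : ν ≠ i), ker (e ν * A)) ⊓ ker (e i * A + (0 : K) • 1) = ⊥) :
    ker A = ⊥ := by
  refine eq_bot_iff.2 fun x hx => ?_
  have hx0 (i : ι) : x = 0 := by
    rw [← mem_bot K, ← h i, he.mem_inf_ker_iff, mem_ker.1 hx]
    simp
  rw [mem_bot, ← he.sum_apply x]
  exact Finset.sum_eq_zero fun i _ => by rw [hx0 i, map_zero]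

theorem ker_mul_eq_of_inf_ker_eq_bot (he : CompleteOrthogonalIdempotents e)
    (h : (⨅ (ν) (_ : ν ≠ i), ker (e ν * A)) ⊓ ker (e i * A + τ • 1) = ⊥) :
    ker ((A + τ • 1) * e i) = ker (e i) := by
  refine le_antisymm (fun x hx => ?_) (ker_le_ker_comp _ _)
  have hAx : A (e i x) = -(τ • e i x) := eq_neg_of_add_eq_zero_left hx
  rw [mem_ker, ← mem_bot K, ← h, he.mem_inf_ker_iff, hAx, map_neg, map_smul,
    he.apply_apply_self]
  exact ⟨rfl, neg_add_cancel _⟩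

theorem inf_ker_eq_bot_of_ker_mul_eq (he : CompleteOrthogonalIdempotents e) (hA : ker A = ⊥)
    (h : ker ((A + τ • 1) * e i) = ker (e i)) :
    (⨅ (ν) (_ : ν ≠ i), ker (e ν * A)) ⊓ ker (e i * A + τ • 1) = ⊥ := by
  refine eq_bot_iff.2 fun x hx => ?_
  obtain ⟨hEAx, hAx⟩ := he.mem_inf_ker_iff.1 hx
  rcases eq_or_ne τ 0 with rfl | hτ
  · rw [zero_smul, add_zero] at hAx
    exact hA ▸ hAx
  have hEx : e i x = x := by
    have hx' : x = -τ⁻¹ • A x := by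
      rw [eq_neg_of_add_eq_zero_left hAx, smul_neg, neg_smul, neg_neg, inv_smul_smul₀ hτ]
    rw [hx', map_smul, hEAx]
  have hker : x ∈ ker ((A + τ • 1) * e i) := by
    simpa [hEx] using hAx
  rw [h, mem_ker, hEx] at hker
  exact hker

theorem range_mul_eq_of_sup_range_eq_top (he : CompleteOrthogonalIdempotents e)
    (h : (⨆ (ν) (_ : ν ≠ i), range (e ν * A)) ⊔ range (e i * A + τ • 1) = ⊤) :
    range (e i * (A + τ • 1)) = range (e i) := by
  have hmap := congrArg (Submodule.map (e i)) h
  have hν (ν : ι) (hν : ν ≠ i) : (range (e ν * A)).map (e i) = ⊥ := by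
    rw [← range_comp, ← Module.End.mul_eq_comp, ← mul_assoc, he.ortho hν.symm, zero_mul,
      range_zero]
  have hi : e i * (e i * A + τ • 1) = e i * (A + τ • 1) := by
    rw [mul_add, mul_add, ← mul_assoc, (he.idem i).eq]
  simp_rw [Submodule.map_top, Submodule.map_sup, Submodule.map_iSup] at hmap
  rw [iSup₂_eq_bot.2 hν, bot_sup_eq, ← range_comp, ← Module.End.mul_eq_comp, hi] at hmap
  exact hmap

theorem sup_range_eq_top_of_range_mul_eq (he : CompleteOrthogonalIdempotents e)
    (hA : range A = ⊤) (h : range (e i * (A + τ • 1)) = range (e i)) :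
    (⨆ (ν) (_ : ν ≠ i), range (e ν * A)) ⊔ range (e i * A + τ • 1) = ⊤ := by
  have hker {z : V} (hz : e i z = 0) : z ∈ ⨆ (ν) (_ : ν ≠ i), range (e ν * A) := by
    simpa only [Module.End.mul_eq_comp, range_comp_of_range_eq_top _ hA] using
      he.mem_iSup_range_of_apply_eq_zero hz
  have hsub (z : V) : e i (z - e i z) = 0 := by rw [map_sub, he.apply_apply_self, sub_self]
  refine eq_top_iff.2 fun y _ => ?_
  obtain ⟨z, hz⟩ : e i y ∈ range (e i * (A + τ • 1)) := h.symm ▸ mem_range_self _ y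
  have hy : y = (y - e i y) - τ • (z - e i z) + (e i * A + τ • 1) z := by
    simp only [Module.End.mul_apply, LinearMap.add_apply, LinearMap.smul_apply,
      Module.End.one_apply, map_add, map_smul] at hz ⊢
    rw [← hz]
    module
  rw [hy]
  exact add_mem (mem_sup_left (sub_mem (hker (hsub y)) (smul_mem _ τ (hker (hsub z)))))
    (mem_sup_right (mem_range_self _ z))

theorem inf_ker_eq_bot_and_sup_range_eq_top_iff [FiniteDimensional K V]
    (he : CompleteOrthogonalIdempotents e) (A : Module.End K V) :
    (∀ (i : ι) (τ : K),
      (⨅ (ν) (_ : ν ≠ i), ker (e ν * A)) ⊓ ker (e i * A + τ • 1) = ⊥ ∧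
      (⨆ (ν) (_ : ν ≠ i), range (e ν * A)) ⊔ range (e i * A + τ • 1) = ⊤) ↔
    ker A = ⊥ ∧ ∀ (i : ι) (τ : K),
      ker ((A + τ • 1) * e i) = ker (e i) ∧ range (e i * (A + τ • 1)) = range (e i) := by
  constructor
  · intro h
    exact ⟨he.ker_eq_bot_of_inf_ker_eq_bot fun i => (h i 0).1, fun i τ =>
      ⟨he.ker_mul_eq_of_inf_ker_eq_bot (h i τ).1, he.range_mul_eq_of_sup_range_eq_top (h i τ).2⟩⟩
  · rintro ⟨hA, h⟩ i τ
    exact ⟨he.inf_ker_eq_bot_of_ker_mul_eq hA (h i τ).1,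
      he.sup_range_eq_top_of_range_mul_eq (ker_eq_bot_iff_range_eq_top.1 hA) (h i τ).2⟩

end Field

end CompleteOrthogonalIdempotents

namespace LinearMap

variable {K U V W : Type*} [Field K] [AddCommGroup U] [Module K U] [AddCommGroup V] [Module K V]
  [AddCommGroup W] [Module K W]

theorem finrank_range_comp_eq_iff_ker_eq [FiniteDimensional K U] (f : U →ₗ[K] V)
    (g : V →ₗ[K] W) :
    finrank K (range (g ∘ₗ f)) = finrank K (range f) ↔ ker (g ∘ₗ f) = ker f := by
  have hf := finrank_range_add_finrank_ker f
  have hgf := finrank_range_add_finrank_ker (g ∘ₗ f)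
  refine ⟨fun h => (Submodule.eq_of_le_of_finrank_eq (ker_le_ker_comp f g) (by omega)).symm,
    fun h => ?_⟩
  rw [h] at hgf
  omega

theorem finrank_range_comp_eq_iff_range_eq [FiniteDimensional K V] (f : U →ₗ[K] V)
    (g : V →ₗ[K] W) :
    finrank K (range (g ∘ₗ f)) = finrank K (range g) ↔ range (g ∘ₗ f) = range g :=
  ⟨fun h => Submodule.eq_of_le_of_finrank_eq (range_comp_le_range f g) h,
    fun h => by rw [h]⟩

end LinearMap

namespace Matrix

variable {K l m n : Type*} [Field K] [Fintype n]

theorem rank_mul_eq_rank_right_iff [Fintype m] (M : Matrix l m K) (N : Matrix m n K) :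
    (M * N).rank = N.rank ↔ ker (M * N).mulVecLin = ker N.mulVecLin := by
  rw [rank, rank, mulVecLin_mul]
  exact finrank_range_comp_eq_iff_ker_eq _ _

theorem rank_mul_eq_rank_left_iff [Fintype m] (M : Matrix l m K) (N : Matrix m n K) :
    (M * N).rank = M.rank ↔ range (M * N).mulVecLin = range M.mulVecLin := by
  rw [rank, rank, mulVecLin_mul]
  exact finrank_range_comp_eq_iff_range_eq _ _

theorem rank_eq_card_iff_ker_eq_bot (M : Matrix m n K) :
    M.rank = Fintype.card n ↔ ker M.mulVecLin = ⊥ := by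
  have h := finrank_range_add_finrank_ker M.mulVecLin
  rw [finrank_fintype_fun_eq_card] at h
  rw [rank, ← Submodule.finrank_eq_zero]
  omega

end Matrix

section Eproj

variable (p : ℕ) (nn : Fin p → ℕ)

theorem Eproj_eq_diagonal (i : Fin p) :
    Eproj p nn i = diagonal fun x => if x.1 = i then 1 else 0 := by
  ext x y
  by_cases h : x = y <;> simp [Eproj, diagonal, h]

theorem completeOrthogonalIdempotents_Eproj :
    CompleteOrthogonalIdempotents (Eproj p nn) := by
  refine CompleteOrthogonalIdempotents.iff_ortho_complete.2 ⟨fun i j hij => ?_, ?_⟩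
  · show Eproj p nn i * Eproj p nn j = 0
    rw [Eproj_eq_diagonal, Eproj_eq_diagonal, diagonal_mul_diagonal, ← diagonal_zero]
    congr 1
    funext x
    split_ifs <;> simp_all
  · ext x y
    simp only [Matrix.sum_apply, Eproj, one_apply, ite_and]
    split_ifs <;> simp [*]

theorem rank_Eproj (i : Fin p) : (Eproj p nn i).rank = nn i := by
  rw [Eproj_eq_diagonal, Matrix.rank_diagonal]
  simpa using Fintype.card_congr (Equiv.sigmaSubtype (β := fun j => Fin (nn j)) i)

theorem rank_mul_Eproj_eq_iff (i : Fin p)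
    (M : Matrix ((j : Fin p) × Fin (nn j)) ((j : Fin p) × Fin (nn j)) ℂ) :
    (M * Eproj p nn i).rank = nn i ↔
      ker (M * Eproj p nn i).mulVecLin = ker (Eproj p nn i).mulVecLin := by
  rw [← rank_mul_eq_rank_right_iff, rank_Eproj]

theorem rank_Eproj_mul_eq_iff (i : Fin p)
    (M : Matrix ((j : Fin p) × Fin (nn j)) ((j : Fin p) × Fin (nn j)) ℂ) :
    (Eproj p nn i * M).rank = nn i ↔
      range (Eproj p nn i * M).mulVecLin = range (Eproj p nn i).mulVecLin := by
  rw [← rank_mul_eq_rank_left_iff, rank_Eproj]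

end Eproj

theorem stmt_7_general (p : ℕ) (nn : Fin p → ℕ)
    (A : Matrix ((j : Fin p) × Fin (nn j)) ((j : Fin p) × Fin (nn j)) ℂ) :
    (∀ (i : Fin p) (τ : ℂ),
      ((⨅ (ν : Fin p) (_ : ν ≠ i), LinearMap.ker (Eproj p nn ν * A).mulVecLin) ⊓
          LinearMap.ker (Eproj p nn i * A + τ • 1).mulVecLin = ⊥) ∧
      ((⨆ (ν : Fin p) (_ : ν ≠ i), LinearMap.range (Eproj p nn ν * A).mulVecLin) ⊔
          LinearMap.range (Eproj p nn i * A + τ • 1).mulVecLin = ⊤))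
    ↔ (A.rank = ∑ i, nn i ∧
      ∀ (i : Fin p) (τ : ℂ),
        ((A + τ • 1) * Eproj p nn i).rank = nn i ∧
        (Eproj p nn i * (A + τ • 1)).rank = nn i) := by
  let φ : Matrix ((j : Fin p) × Fin (nn j)) ((j : Fin p) × Fin (nn j)) ℂ ≃ₐ[ℂ] Module.End ℂ _ :=
    toLinAlgEquiv'
  have hφ (M : Matrix ((j : Fin p) × Fin (nn j)) ((j : Fin p) × Fin (nn j)) ℂ) :
      M.mulVecLin = φ M := rfl
  have hcard : Fintype.card ((j : Fin p) × Fin (nn j)) = ∑ i, nn i := by simp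
  simp only [← hcard, rank_eq_card_iff_ker_eq_bot, rank_mul_Eproj_eq_iff, rank_Eproj_mul_eq_iff,
    hφ, map_mul, map_add, map_smul, map_one]
  exact ((completeOrthogonalIdempotents_Eproj p nn).map
    φ.toRingHom).inf_ker_eq_bot_and_sup_range_eq_top_iff (φ A)

/-- For `A ∈ M(n,ℂ)` and `A_j := E_j A`, the pair of conditions
(`(*)`/`(**)`) holds for all `i` and `τ ∈ ℂ` iff `rank A = n` and
`rank((A+τ)E_i) = rank(E_i(A+τ)) = n_i` for all `i` and `τ`. -/
theorem stmt_7 (p : ℕ) (nn : Fin p → ℕ) (hpos : ∀ i, 0 < nn i)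
    (A : Matrix ((j : Fin p) × Fin (nn j)) ((j : Fin p) × Fin (nn j)) ℂ) :
    (∀ (i : Fin p) (τ : ℂ),
      ((⨅ (ν : Fin p) (_ : ν ≠ i), LinearMap.ker (Eproj p nn ν * A).mulVecLin) ⊓
          LinearMap.ker (Eproj p nn i * A + τ • 1).mulVecLin = ⊥) ∧
      ((⨆ (ν : Fin p) (_ : ν ≠ i), LinearMap.range (Eproj p nn ν * A).mulVecLin) ⊔
          LinearMap.range (Eproj p nn i * A + τ • 1).mulVecLin = ⊤))
    ↔ (A.rank = ∑ i, nn i ∧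
      ∀ (i : Fin p) (τ : ℂ),
        ((A + τ • 1) * Eproj p nn i).rank = nn i ∧
        (Eproj p nn i * (A + τ • 1)).rank = nn i) :=
  stmt_7_general p nn A
end

section
/- Let A ∈ M(n,ℂ) satisfy the Okubo conditions, let ρ_1, ρ_2 ∈ ℂ with ρ_1ρ_2 ≠ 0, set A_j := E_j A (j = 1,…,p) and Â_j := Ê_j Â (j = 1,…,p+1), noting Â_j V̂ ⊆ V̂. Then the tuple (Â_1|_{V̂},…,Â_{p+1}|_{V̂}) is irreducible on V̂ (i.e. the only subspaces W ⊆ V̂ with Â_j W ⊆ W for all j = 1,…,p+1 are {0} and V̂) if and only if the tuple (A_1,…,A_p) is irreducible on ℂ^n (i.e. the only subspaces U ⊆ ℂ^n with A_j U ⊆ U for all j = 1,…,p are {0} and ℂ^n). -/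
open Matrix

/-- The extended matrix `Â = [[A, I],[−B, (ρ_1+ρ_2)I − A]] ∈ M(2n,ℂ)`, where
`B := (A−ρ_1I)(A−ρ_2I)`. -/
noncomputable def Ahat {ι : Type} [Fintype ι] [DecidableEq ι]
    (A : Matrix ι ι ℂ) (ρ₁ ρ₂ : ℂ) : Matrix (ι ⊕ ι) (ι ⊕ ι) ℂ :=
  Matrix.fromBlocks A 1
    (-((A - ρ₁ • 1) * (A - ρ₂ • 1))) ((ρ₁ + ρ₂) • 1 - A)

/-- The subspace `V̂ = {(u,v) ∈ ℂ^n × ℂ^n : v ∈ Im B} ⊆ ℂ^{2n}`,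
where `B := (A−ρ_1I)(A−ρ_2I)`. -/
noncomputable def Vhat {ι : Type} [Fintype ι] [DecidableEq ι]
    (A : Matrix ι ι ℂ) (ρ₁ ρ₂ : ℂ) : Submodule ℂ (ι ⊕ ι → ℂ) :=
  Submodule.comap (LinearMap.funLeft ℂ ℂ (Sum.inr : ι → ι ⊕ ι))
    (LinearMap.range ((A - ρ₁ • 1) * (A - ρ₂ • 1)).mulVecLin)

/-- The idempotents `Ê_i ∈ M(2n,ℂ)` (`i = 1,…,p+1`) of the extended partition:
for `i ≤ p` the projection onto block `i` of the first factor `ℂ^n`, and for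
`i = p+1` the projection onto the second factor `ℂ^n`. -/
noncomputable def Ehat (p : ℕ) (nn : Fin p → ℕ) (i : Fin (p + 1)) :
    Matrix (((j : Fin p) × Fin (nn j)) ⊕ ((j : Fin p) × Fin (nn j)))
      (((j : Fin p) × Fin (nn j)) ⊕ ((j : Fin p) × Fin (nn j))) ℂ :=
  if h : (i : ℕ) < p then Matrix.fromBlocks (Eproj p nn ⟨i, h⟩) 0 0 0
  else Matrix.fromBlocks 0 0 0 1

/-- The extended partition `(n_1,…,n_p,n_{p+1})` with `n_{p+1} := rank B`, where
`B := (A−ρ_1I)(A−ρ_2I)`. -/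
noncomputable def nhat {ι : Type} [Fintype ι] [DecidableEq ι] (p : ℕ) (nn : Fin p → ℕ)
    (A : Matrix ι ι ℂ) (ρ₁ ρ₂ : ℂ) (i : Fin (p + 1)) : ℕ :=
  if h : (i : ℕ) < p then nn ⟨i, h⟩ else ((A - ρ₁ • 1) * (A - ρ₂ • 1)).rank

/-!
Write `B = (A - ρ₁)(A - ρ₂)`. A subspace `U ⊆ ℂⁿ` invariant under all `E_k A` lifts to the
`Â_k`-invariant subspace `U × (U ∩ Im B) ⊆ V̂`; for this one needs `U` to be invariant under `A`
(as `∑ E_k = 1`) and under each `E_k` (as `A` is invertible, so `A U = U`). Conversely, for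
`W ⊆ V̂` invariant under all `Â_k`, the slice `{u | (u, 0) ∈ W}` is invariant under all `E_k A`.
If it is `⊤`, then `W` contains every `(u, 0)`, hence every `(0, B w)` (apply `Â_{p+1}` to
`(-w, 0)`), so `W = V̂`. If it is `⊥`, then `v = -A u` on `W`, and
`Â_{p+1} (u, -A u) = (0, -ρ₁ρ₂ u)` forces `u = 0` since `ρ₁ρ₂ ≠ 0`.
-/

theorem Submodule.map_eq_self_of_injective {K V : Type*} [DivisionRing K] [AddCommGroup V]
    [Module K V] [FiniteDimensional K V] {f : V →ₗ[K] V} (hf : Function.Injective f)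
    {U : Submodule K V} (hU : U.map f ≤ U) : U.map f = U :=
  Submodule.eq_of_le_of_finrank_le hU (Submodule.equivMapOfInjective f hf U).finrank_eq.le

namespace Matrix

variable {R n κ : Type*} [Fintype n]

theorem map_mulVecLin_le_iff [CommSemiring R] {M : Matrix n n R} {U : Submodule R (n → R)} :
    U.map M.mulVecLin ≤ U ↔ ∀ x ∈ U, M *ᵥ x ∈ U :=
  Submodule.map_le_iff_le_comap

variable [DecidableEq n]

theorem mem_of_forall_mulVec_mem [Semiring R] [Fintype κ] {E : κ → Matrix n n R}
    (hE : ∑ k, E k = 1) {U : Submodule R (n → R)} {x : n → R} (h : ∀ k, E k *ᵥ x ∈ U) :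
    x ∈ U := by
  have hx : ∑ k, E k *ᵥ x = x := by rw [← sum_mulVec, hE, one_mulVec]
  exact hx ▸ Submodule.sum_mem U fun k _ => h k

theorem mulVec_mem_of_mul_mulVec_mem {K : Type*} [Field K] {A E : Matrix n n K} (hA : IsUnit A)
    {U : Submodule K (n → K)} (hAU : ∀ x ∈ U, A *ᵥ x ∈ U) (hEU : ∀ x ∈ U, (E * A) *ᵥ x ∈ U) :
    ∀ x ∈ U, E *ᵥ x ∈ U := by
  have hmap : U.map A.mulVecLin = U :=
    Submodule.map_eq_self_of_injective (mulVec_injective_iff_isUnit.2 hA)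
      (map_mulVecLin_le_iff.2 hAU)
  intro x hx
  obtain ⟨y, hy, rfl⟩ := hmap.symm ▸ hx
  rw [mulVecLin_apply, mulVec_mulVec]
  exact hEU y hy

theorem isUnit_of_rank_eq_card {K : Type*} [Field K] {A : Matrix n n K}
    (h : A.rank = Fintype.card n) : IsUnit A := by
  rw [← mulVec_surjective_iff_isUnit, ← coe_mulVecLin, ← LinearMap.range_eq_top]
  apply Submodule.eq_top_of_finrank_eq
  rwa [Module.finrank_fintype_fun_eq_card]

variable [CommRing R] (A : Matrix n n R) (ρ₁ ρ₂ : R)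

theorem commute_sub_smul_one_mul_sub_smul_one :
    Commute A ((A - ρ₁ • 1) * (A - ρ₂ • 1)) :=
  have h (ρ : R) : Commute A (A - ρ • 1) :=
    (Commute.refl A).sub_right ((Commute.one_right A).smul_right ρ)
  (h ρ₁).mul_right (h ρ₂)

theorem sub_smul_one_mul_sub_smul_one_mulVec (x : n → R) :
    ((A - ρ₁ • 1) * (A - ρ₂ • 1)) *ᵥ x = A *ᵥ (A *ᵥ x) - (ρ₁ + ρ₂) • A *ᵥ x + (ρ₁ * ρ₂) • x := by
  simp only [← mulVec_mulVec, sub_mulVec, mulVec_sub, smul_mulVec, mulVec_smul, one_mulVec]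
  module

end Matrix

namespace Submodule

variable {R α β : Type*} [Semiring R]

def sumElim (U : Submodule R (α → R)) (U' : Submodule R (β → R)) : Submodule R (α ⊕ β → R) :=
  (U.prod U').comap (LinearEquiv.sumArrowLequivProdArrow α β R R).toLinearMap

theorem mem_sumElim {U : Submodule R (α → R)} {U' : Submodule R (β → R)} {u : α → R}
    {v : β → R} : Sum.elim u v ∈ U.sumElim U' ↔ u ∈ U ∧ v ∈ U' :=
  Iff.rfl

def sliceInl (W : Submodule R (α ⊕ β → R)) : Submodule R (α → R) :=
  W.comap ((LinearEquiv.sumArrowLequivProdArrow α β R R).symm.toLinearMap ∘ₗ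
    LinearMap.inl R (α → R) (β → R))

theorem mem_sliceInl {W : Submodule R (α ⊕ β → R)} {u : α → R} :
    u ∈ W.sliceInl ↔ Sum.elim u 0 ∈ W :=
  Iff.rfl

theorem map_mulVecLin_le_iff_sumElim {R : Type*} [CommSemiring R] [Fintype α] [Fintype β]
    {M : Matrix (α ⊕ β) (α ⊕ β) R} {W : Submodule R (α ⊕ β → R)} :
    W.map M.mulVecLin ≤ W ↔ ∀ u v, Sum.elim u v ∈ W → M *ᵥ Sum.elim u v ∈ W :=
  Matrix.map_mulVecLin_le_iff.trans
    ⟨fun h _ _ => h _, fun h f => Sum.elim_comp_inl_inr f ▸ h _ _⟩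

end Submodule

section Hat

variable {ι : Type} [Fintype ι] [DecidableEq ι] {κ : Type*}
  (E : κ → Matrix ι ι ℂ) (A : Matrix ι ι ℂ) (ρ₁ ρ₂ : ℂ)

theorem mem_Vhat_sumElim {u v : ι → ℂ} :
    Sum.elim u v ∈ Vhat A ρ₁ ρ₂ ↔ v ∈ LinearMap.range ((A - ρ₁ • 1) * (A - ρ₂ • 1)).mulVecLin :=
  Iff.rfl

theorem Ahat_mulVec_sumElim (u v : ι → ℂ) :
    Ahat A ρ₁ ρ₂ *ᵥ Sum.elim u v =
      Sum.elim (A *ᵥ u + v) ((ρ₁ + ρ₂) • v - A *ᵥ v - ((A - ρ₁ • 1) * (A - ρ₂ • 1)) *ᵥ u) := by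
  rw [Ahat, fromBlocks_mulVec, Sum.elim_comp_inl, Sum.elim_comp_inr]
  congr 1
  · rw [one_mulVec]
  · rw [neg_mulVec, sub_mulVec, smul_mulVec, one_mulVec]
    abel

theorem fromBlocks₁₁_mul_Ahat_mulVec_sumElim (M : Matrix ι ι ℂ) (u v : ι → ℂ) :
    (fromBlocks M 0 0 0 * Ahat A ρ₁ ρ₂) *ᵥ Sum.elim u v = Sum.elim (M *ᵥ (A *ᵥ u + v)) 0 := by
  rw [← mulVec_mulVec, Ahat_mulVec_sumElim, fromBlocks_mulVec]
  simp

theorem fromBlocks₂₂_mul_Ahat_mulVec_sumElim (u v : ι → ℂ) :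
    (fromBlocks 0 0 0 1 * Ahat A ρ₁ ρ₂) *ᵥ Sum.elim u v =
      Sum.elim (0 : ι → ℂ) ((ρ₁ + ρ₂) • v - A *ᵥ v - ((A - ρ₁ • 1) * (A - ρ₂ • 1)) *ᵥ u) := by
  rw [← mulVec_mulVec, Ahat_mulVec_sumElim, fromBlocks_mulVec]
  simp

/-- `W` is invariant under `fromBlocks (E k) 0 0 0 * Ahat A ρ₁ ρ₂` for every `k` and under
`fromBlocks 0 0 0 1 * Ahat A ρ₁ ρ₂`, written out on pairs `(u, v)`. -/
def IsHatInvariant (W : Submodule ℂ (ι ⊕ ι → ℂ)) : Prop :=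
  (∀ k u v, Sum.elim u v ∈ W → Sum.elim (E k *ᵥ (A *ᵥ u + v)) 0 ∈ W) ∧
    ∀ u v, Sum.elim u v ∈ W →
      Sum.elim (0 : ι → ℂ) ((ρ₁ + ρ₂) • v - A *ᵥ v - ((A - ρ₁ • 1) * (A - ρ₂ • 1)) *ᵥ u) ∈ W

variable {E A ρ₁ ρ₂}

theorem isHatInvariant_sumElim_inf_range {U : Submodule ℂ (ι → ℂ)}
    (hAU : ∀ x ∈ U, A *ᵥ x ∈ U) (hEU : ∀ k, ∀ x ∈ U, E k *ᵥ x ∈ U) :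
    IsHatInvariant E A ρ₁ ρ₂
      (U.sumElim (U ⊓ LinearMap.range ((A - ρ₁ • 1) * (A - ρ₂ • 1)).mulVecLin)) := by
  set B := (A - ρ₁ • 1) * (A - ρ₂ • 1)
  have hBU : ∀ x ∈ U, B *ᵥ x ∈ U := by
    intro x hx
    rw [sub_smul_one_mul_sub_smul_one_mulVec]
    exact add_mem (sub_mem (hAU _ (hAU x hx)) (U.smul_mem _ (hAU x hx))) (U.smul_mem _ hx)
  have hAB : ∀ x ∈ LinearMap.range B.mulVecLin, A *ᵥ x ∈ LinearMap.range B.mulVecLin := by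
    rintro _ ⟨w, rfl⟩
    refine ⟨A *ᵥ w, ?_⟩
    simp only [B, mulVecLin_apply, mulVec_mulVec,
      (commute_sub_smul_one_mul_sub_smul_one A ρ₁ ρ₂).eq]
  simp only [IsHatInvariant, Submodule.mem_sumElim, Submodule.mem_inf]
  refine ⟨fun k u v ⟨hu, hv, _⟩ => ⟨hEU k _ (add_mem (hAU u hu) hv), zero_mem _, zero_mem _⟩,
    fun u v ⟨hu, hv, hvB⟩ => ⟨zero_mem _, ?_, ?_⟩⟩
  · exact sub_mem (sub_mem (U.smul_mem _ hv) (hAU v hv)) (hBU u hu)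
  · exact sub_mem (sub_mem (Submodule.smul_mem _ _ hvB) (hAB v hvB)) ⟨u, rfl⟩

theorem irreducible_of_irreducible_hat [Fintype κ] (hE : ∑ k, E k = 1) (hA : IsUnit A)
    (h : ∀ W : Submodule ℂ (ι ⊕ ι → ℂ), W ≤ Vhat A ρ₁ ρ₂ → IsHatInvariant E A ρ₁ ρ₂ W →
      W = ⊥ ∨ W = Vhat A ρ₁ ρ₂)
    (U : Submodule ℂ (ι → ℂ)) (hU : ∀ k, U.map (E k * A).mulVecLin ≤ U) : U = ⊥ ∨ U = ⊤ := by
  simp only [map_mulVecLin_le_iff] at hU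
  have hAU : ∀ x ∈ U, A *ᵥ x ∈ U := fun x hx =>
    mem_of_forall_mulVec_mem hE fun k => mulVec_mulVec x (E k) A ▸ hU k x hx
  have hEU : ∀ k, ∀ x ∈ U, E k *ᵥ x ∈ U := fun k => mulVec_mem_of_mul_mulVec_mem hA hAU (hU k)
  set W := U.sumElim (U ⊓ LinearMap.range ((A - ρ₁ • 1) * (A - ρ₂ • 1)).mulVecLin)
  have hWV : W ≤ Vhat A ρ₁ ρ₂ := fun f hf => by
    rw [← Sum.elim_comp_inl_inr f] at hf ⊢
    exact (Submodule.mem_sumElim.1 hf).2.2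
  rcases h W hWV (isHatInvariant_sumElim_inf_range hAU hEU) with hW | hW
  · refine Or.inl (U.eq_bot_iff.2 fun u hu => ?_)
    have : Sum.elim u 0 ∈ W := Submodule.mem_sumElim.2 ⟨hu, zero_mem _⟩
    rw [hW, Submodule.mem_bot] at this
    exact funext fun i => congrFun this (Sum.inl i)
  · refine Or.inr (U.eq_top_iff'.2 fun u => ?_)
    have : Sum.elim u 0 ∈ Vhat A ρ₁ ρ₂ := (mem_Vhat_sumElim A ρ₁ ρ₂).2 (zero_mem _)
    rw [← hW] at this
    exact (Submodule.mem_sumElim.1 this).1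

namespace IsHatInvariant

variable {W : Submodule ℂ (ι ⊕ ι → ℂ)} (hW : IsHatInvariant E A ρ₁ ρ₂ W)
include hW

theorem map_sliceInl_le (k : κ) : W.sliceInl.map (E k * A).mulVecLin ≤ W.sliceInl := by
  refine map_mulVecLin_le_iff.2 fun u hu => ?_
  simpa [Submodule.mem_sliceInl, mulVec_mulVec] using hW.1 k u 0 hu

theorem eq_bot_of_sliceInl_eq_bot [Fintype κ] (hE : ∑ k, E k = 1) (hρ : ρ₁ * ρ₂ ≠ 0)
    (hU : W.sliceInl = ⊥) : W = ⊥ := by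
  have hv : ∀ u v, Sum.elim u v ∈ W → v = -(A *ᵥ u) := by
    intro u v huv
    have : A *ᵥ u + v ∈ W.sliceInl := mem_of_forall_mulVec_mem hE fun k => hW.1 k u v huv
    rw [hU, Submodule.mem_bot] at this
    exact eq_neg_of_add_eq_zero_right this
  refine W.eq_bot_iff.2 fun f hf => ?_
  obtain ⟨u, v, rfl⟩ : ∃ u v, f = Sum.elim u v := ⟨_, _, (Sum.elim_comp_inl_inr f).symm⟩
  obtain rfl := hv _ _ hf
  have hlast := hW.2 _ _ hf
  rw [show (ρ₁ + ρ₂) • -(A *ᵥ u) - A *ᵥ -(A *ᵥ u) - ((A - ρ₁ • 1) * (A - ρ₂ • 1)) *ᵥ u =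
      -((ρ₁ * ρ₂) • u) by rw [sub_smul_one_mul_sub_smul_one_mulVec, mulVec_neg]; module] at hlast
  have hu : u = 0 := by
    simpa [hρ] using hv _ _ hlast
  simp [hu]

theorem eq_Vhat_of_sliceInl_eq_top (hWV : W ≤ Vhat A ρ₁ ρ₂) (hU : W.sliceInl = ⊤) :
    W = Vhat A ρ₁ ρ₂ := by
  refine le_antisymm hWV fun f hf => ?_
  obtain ⟨u, v, rfl⟩ : ∃ u v, f = Sum.elim u v := ⟨_, _, (Sum.elim_comp_inl_inr f).symm⟩
  obtain ⟨w, rfl⟩ := (mem_Vhat_sumElim A ρ₁ ρ₂).1 hf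
  have hinl : ∀ u : ι → ℂ, Sum.elim u 0 ∈ W := fun u =>
    Submodule.mem_sliceInl.1 (hU ▸ Submodule.mem_top)
  have hinr : Sum.elim (0 : ι → ℂ) (((A - ρ₁ • 1) * (A - ρ₂ • 1)) *ᵥ w) ∈ W := by
    simpa [mulVec_neg] using hW.2 (-w) 0 (hinl _)
  convert add_mem (hinl u) hinr using 1
  rw [← Sum.elim_add_add, add_zero, zero_add, mulVecLin_apply]

end IsHatInvariant

theorem irreducible_hat_of_irreducible [Fintype κ] (hE : ∑ k, E k = 1) (hρ : ρ₁ * ρ₂ ≠ 0)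
    (h : ∀ U : Submodule ℂ (ι → ℂ), (∀ k, U.map (E k * A).mulVecLin ≤ U) → U = ⊥ ∨ U = ⊤)
    (W : Submodule ℂ (ι ⊕ ι → ℂ)) (hWV : W ≤ Vhat A ρ₁ ρ₂) (hW : IsHatInvariant E A ρ₁ ρ₂ W) :
    W = ⊥ ∨ W = Vhat A ρ₁ ρ₂ :=
  (h W.sliceInl hW.map_sliceInl_le).imp (hW.eq_bot_of_sliceInl_eq_bot hE hρ)
    (hW.eq_Vhat_of_sliceInl_eq_top hWV)

end Hat

section Blocks

variable (p : ℕ) (nn : Fin p → ℕ)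

theorem sum_Eproj : ∑ i, Eproj p nn i = 1 := by
  ext x y
  by_cases h : x = y <;> simp [Eproj, Matrix.sum_apply, Matrix.one_apply, h]

theorem Ehat_castSucc (i : Fin p) : Ehat p nn i.castSucc = fromBlocks (Eproj p nn i) 0 0 0 := by
  simp [Ehat]

theorem Ehat_last : Ehat p nn (Fin.last p) = fromBlocks 0 0 0 1 := by
  simp [Ehat]

theorem forall_map_Ehat_mul_Ahat_le_iff
    {A : Matrix ((j : Fin p) × Fin (nn j)) ((j : Fin p) × Fin (nn j)) ℂ} {ρ₁ ρ₂ : ℂ}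
    {W : Submodule ℂ (((j : Fin p) × Fin (nn j)) ⊕ ((j : Fin p) × Fin (nn j)) → ℂ)} :
    (∀ i, W.map (Ehat p nn i * Ahat A ρ₁ ρ₂).mulVecLin ≤ W) ↔
      IsHatInvariant (Eproj p nn) A ρ₁ ρ₂ W := by
  simp only [Fin.forall_fin_succ', Ehat_castSucc, Ehat_last,
    Submodule.map_mulVecLin_le_iff_sumElim, fromBlocks₁₁_mul_Ahat_mulVec_sumElim,
    fromBlocks₂₂_mul_Ahat_mulVec_sumElim]
  rfl

end Blocks

theorem stmt_10_general (p : ℕ) (nn : Fin p → ℕ)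
    (A : Matrix ((j : Fin p) × Fin (nn j)) ((j : Fin p) × Fin (nn j)) ℂ)
    (hrank : A.rank = ∑ i, nn i)
    (ρ₁ ρ₂ : ℂ) (hρ : ρ₁ * ρ₂ ≠ 0) :
    (∀ W : Submodule ℂ (((j : Fin p) × Fin (nn j)) ⊕ ((j : Fin p) × Fin (nn j)) → ℂ),
      W ≤ Vhat A ρ₁ ρ₂ →
      (∀ i : Fin (p + 1),
        Submodule.map (Ehat p nn i * Ahat A ρ₁ ρ₂).mulVecLin W ≤ W) →
      W = ⊥ ∨ W = Vhat A ρ₁ ρ₂)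
    ↔ (∀ U : Submodule ℂ (((j : Fin p) × Fin (nn j)) → ℂ),
      (∀ i : Fin p, Submodule.map (Eproj p nn i * A).mulVecLin U ≤ U) →
      U = ⊥ ∨ U = ⊤) := by
  have hA : IsUnit A := isUnit_of_rank_eq_card (by simpa [Fintype.card_sigma] using hrank)
  simp only [forall_map_Ehat_mul_Ahat_le_iff]
  exact ⟨irreducible_of_irreducible_hat (sum_Eproj p nn) hA,
    irreducible_hat_of_irreducible (sum_Eproj p nn) hρ⟩

/-- Let `A` satisfy the Okubo conditions, `ρ_1ρ_2 ≠ 0`, `A_j := E_j A`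
and `Â_j := Ê_j Â` (each of which preserves `V̂`). The tuple `(Â_1|_{V̂},…,Â_{p+1}|_{V̂})`
is irreducible on `V̂` iff `(A_1,…,A_p)` is irreducible on `ℂ^n`. -/
theorem stmt_10 (p : ℕ) (nn : Fin p → ℕ) (hpos : ∀ i, 0 < nn i)
    (A : Matrix ((j : Fin p) × Fin (nn j)) ((j : Fin p) × Fin (nn j)) ℂ)
    (hrank : A.rank = ∑ i, nn i)
    (hOstar : ∀ (i : Fin p) (τ : ℂ),
      ((A + τ • 1) * Eproj p nn i).rank = nn i ∧
      (Eproj p nn i * (A + τ • 1)).rank = nn i)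
    (ρ₁ ρ₂ : ℂ) (hρ : ρ₁ * ρ₂ ≠ 0)
    (hinv : ∀ i : Fin (p + 1),
      Submodule.map (Ehat p nn i * Ahat A ρ₁ ρ₂).mulVecLin (Vhat A ρ₁ ρ₂) ≤
        Vhat A ρ₁ ρ₂) :
    (∀ W : Submodule ℂ (((j : Fin p) × Fin (nn j)) ⊕ ((j : Fin p) × Fin (nn j)) → ℂ),
      W ≤ Vhat A ρ₁ ρ₂ →
      (∀ i : Fin (p + 1),
        Submodule.map (Ehat p nn i * Ahat A ρ₁ ρ₂).mulVecLin W ≤ W) →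
      W = ⊥ ∨ W = Vhat A ρ₁ ρ₂)
    ↔ (∀ U : Submodule ℂ (((j : Fin p) × Fin (nn j)) → ℂ),
      (∀ i : Fin p, Submodule.map (Eproj p nn i * A).mulVecLin U ≤ U) →
      U = ⊥ ∨ U = ⊤) :=
  stmt_10_general p nn A hrank ρ₁ ρ₂ hρ
end

section
/- For every k ∈ {1,…,N}, the kernel of the product (L(m;λ) − λ_1 I_n)(L(m;λ) − λ_2 I_n)⋯(L(m;λ) − λ_k I_n) has dimension m_1 + m_2 + ⋯ + m_k. -/
open Matrix

/-- The matrix `L(m;λ) ∈ M(n,ℂ)` for the partition `n = m_1 + ⋯ + m_N` (indexed by the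
type `Σ i : Fin N, Fin (m i)`): the `(i,i)` block is `λ_i I_{m_i}`, the `(i,i+1)` block is
`I_{m_i,m_{i+1}} = (δ_{μν})`, and all other blocks vanish. -/
noncomputable def Lmat (N : ℕ) (m : ℕ → ℕ) (lam : ℕ → ℂ) :
    Matrix ((i : Fin N) × Fin (m i)) ((i : Fin N) × Fin (m i)) ℂ :=
  fun x y =>
    if (x.2 : ℕ) = (y.2 : ℕ) then
      (if x.1 = y.1 then lam x.1
        else if (x.1 : ℕ) + 1 = (y.1 : ℕ) then 1 else 0)
    else 0

/-- The ordered product `(L − λ_1 I)(L − λ_2 I)⋯(L − λ_k I)`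
(with `λ_1, …, λ_k` being `lam 0, …, lam (k-1)`). -/
noncomputable def prodFactors {ι : Type} [Fintype ι] [DecidableEq ι]
    (L : Matrix ι ι ℂ) (lam : ℕ → ℂ) : ℕ → Matrix ι ι ℂ
  | 0 => 1
  | k + 1 => prodFactors L lam k * (L - lam k • 1)

/-!
The entry `(x, y)` of `P_k = (L - λ_1)⋯(L - λ_k)` vanishes unless `x` and `y` have the same
position inside their blocks and `k ≤ block y ≤ block x + k`, and it equals `1` when
`block y = block x + k`. So `P_k` kills every vector supported on the first `k` blocks.
Conversely, if `P_k v = 0`, row `(i - k, μ)` of `P_k v` equals `v (i, μ)` plus entries of `v`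
on the blocks `k, …, i - 1`; by induction on `i ≥ k`, `v` vanishes off the first `k` blocks.
Monotonicity of `m` is what makes `(i - k, μ)` an index whenever `(i, μ)` is one.
-/

theorem LinearMap.finrank_iInf_ker_proj {K ι : Type*} [Field K] [Fintype ι] (p : ι → Prop)
    [DecidablePred p] :
    Module.finrank K
        (⨅ (i) (_ : ¬ p i), ker (proj i : (ι → K) →ₗ[K] K) : Submodule K (ι → K)) =
      Fintype.card {i // p i} :=
  (iInfKerProjEquiv K (fun _ => K) (I := {i | p i}) (J := {i | ¬ p i})
    (Set.disjoint_left.2 fun _ h h' => h' h) (fun i _ => em (p i))).finrank_eq.trans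
    (Module.finrank_fintype_fun_eq_card K)

section Lmat

variable {N : ℕ} {m : ℕ → ℕ} (lam : ℕ → ℂ)

theorem sigma_fin_ext {x y : (i : Fin N) × Fin (m i)} (h1 : (x.1 : ℕ) = y.1)
    (h2 : (x.2 : ℕ) = y.2) : x = y := by
  obtain ⟨⟨i, hi⟩, ⟨a, ha⟩⟩ := x
  obtain ⟨⟨j, hj⟩, ⟨b, hb⟩⟩ := y
  simp only at h1 h2
  subst h1 h2
  rfl

theorem exists_fst_add_eq (hmono : ∀ i j, i ≤ j → j < N → m j ≤ m i)
    (y : (i : Fin N) × Fin (m i)) {d : ℕ} (hd : d ≤ y.1) :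
    ∃ r : (i : Fin N) × Fin (m i), (r.1 : ℕ) + d = y.1 ∧ (r.2 : ℕ) = y.2 :=
  ⟨⟨⟨y.1 - d, by omega⟩, ⟨y.2, (y.2.isLt).trans_le (hmono _ _ (Nat.sub_le _ _) y.1.isLt)⟩⟩,
    by simp only; omega, rfl⟩

theorem Lmat_sub_smul_apply (j : ℕ) (x y : (i : Fin N) × Fin (m i)) :
    (Lmat N m lam - lam j • 1) x y =
      if (x.2 : ℕ) = y.2 then
        (if x.1 = y.1 then lam x.1 - lam j else if (x.1 : ℕ) + 1 = y.1 then 1 else 0)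
      else 0 := by
  by_cases hxy : x = y
  · subst hxy
    simp [Lmat]
  · simp only [Matrix.sub_apply, Matrix.smul_apply, one_apply_ne hxy, Lmat, smul_zero, sub_zero]
    split_ifs with h2 h1
    · exact absurd (sigma_fin_ext (congrArg Fin.val h1) h2) hxy
    all_goals rfl

theorem Lmat_sub_smul_apply_ne_zero {j : ℕ} {x y : (i : Fin N) × Fin (m i)}
    (h : (Lmat N m lam - lam j • 1) x y ≠ 0) :
    (x.2 : ℕ) = y.2 ∧ (((x.1 : ℕ) = y.1 ∧ (x.1 : ℕ) ≠ j) ∨ (x.1 : ℕ) + 1 = y.1) := by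
  rw [Lmat_sub_smul_apply] at h
  split_ifs at h with h2 h1 h3
  · exact ⟨h2, .inl ⟨congrArg Fin.val h1, fun hj => h (by rw [hj, sub_self])⟩⟩
  · exact ⟨h2, .inr h3⟩
  all_goals exact absurd rfl h

theorem Lmat_sub_smul_apply_of_succ {j : ℕ} {x y : (i : Fin N) × Fin (m i)}
    (h1 : (x.1 : ℕ) + 1 = y.1) (h2 : (x.2 : ℕ) = y.2) :
    (Lmat N m lam - lam j • 1) x y = 1 := by
  rw [Lmat_sub_smul_apply, if_pos h2, if_neg (fun h => by rw [h] at h1; omega), if_pos h1]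

theorem prodFactors_Lmat_apply_ne_zero {k : ℕ} {x y : (i : Fin N) × Fin (m i)}
    (h : prodFactors (Lmat N m lam) lam k x y ≠ 0) :
    (x.2 : ℕ) = y.2 ∧ k ≤ y.1 ∧ (y.1 : ℕ) ≤ x.1 + k := by
  induction k generalizing y with
  | zero =>
    obtain rfl : x = y := by
      by_contra hxy
      exact h (by simp [prodFactors, Matrix.one_apply_ne hxy])
    simp
  | succ k ih =>
    rw [prodFactors, Matrix.mul_apply] at h
    obtain ⟨c, -, hc⟩ := Finset.exists_ne_zero_of_sum_ne_zero h
    obtain ⟨hxc2, hkc, hcx⟩ := ih (left_ne_zero_of_mul hc)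
    obtain ⟨hcy2, ⟨hcy1, hck⟩ | hcy1⟩ := Lmat_sub_smul_apply_ne_zero lam (right_ne_zero_of_mul hc)
    all_goals omega

theorem prodFactors_Lmat_apply_eq_one (hmono : ∀ i j, i ≤ j → j < N → m j ≤ m i) {k : ℕ}
    {x y : (i : Fin N) × Fin (m i)} (h1 : (y.1 : ℕ) = x.1 + k) (h2 : (y.2 : ℕ) = x.2) :
    prodFactors (Lmat N m lam) lam k x y = 1 := by
  induction k generalizing y with
  | zero =>
    obtain rfl : x = y := sigma_fin_ext h1.symm h2.symm
    simp [prodFactors]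
  | succ k ih =>
    obtain ⟨c, hc1, hc2⟩ := exists_fst_add_eq hmono y (d := 1) (by omega)
    rw [prodFactors, Matrix.mul_apply, Finset.sum_eq_single c]
    · rw [ih (by omega) (by omega), Lmat_sub_smul_apply_of_succ lam hc1 hc2, one_mul]
    · intro c' _ hc'
      by_contra hne
      obtain ⟨h2', -, h1'⟩ := prodFactors_Lmat_apply_ne_zero lam (left_ne_zero_of_mul hne)
      obtain ⟨-, ⟨h, -⟩ | h⟩ := Lmat_sub_smul_apply_ne_zero lam (right_ne_zero_of_mul hne)
      · omega
      · exact hc' (sigma_fin_ext (by omega) (by omega))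
    · simp

theorem mulVec_prodFactors_Lmat_eq_zero_iff (hmono : ∀ i j, i ≤ j → j < N → m j ≤ m i) (k : ℕ)
    (v : (i : Fin N) × Fin (m i) → ℂ) :
    prodFactors (Lmat N m lam) lam k *ᵥ v = 0 ↔
      ∀ y : (i : Fin N) × Fin (m i), ¬ (y.1 : ℕ) < k → v y = 0 := by
  constructor
  · intro hv y
    induction hy : (y.1 : ℕ) using Nat.strong_induction_on generalizing y with
    | _ b ih =>
      intro hyk
      obtain ⟨r, hr1, hr2⟩ := exists_fst_add_eq hmono y (d := k) (by omega)
      have hr : (prodFactors (Lmat N m lam) lam k *ᵥ v) r = v y := by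
        simp only [mulVec, dotProduct]
        rw [Finset.sum_eq_single y]
        · rw [prodFactors_Lmat_apply_eq_one lam hmono (by omega) hr2.symm, one_mul]
        · intro y' _ hy'
          by_cases hP : prodFactors (Lmat N m lam) lam k r y' = 0
          · rw [hP, zero_mul]
          obtain ⟨h2, hk, h1⟩ := prodFactors_Lmat_apply_ne_zero lam hP
          have hlt : (y'.1 : ℕ) < b :=
            lt_of_le_of_ne (by omega) fun h => hy' (sigma_fin_ext (by omega) (by omega))
          rw [ih _ hlt y' rfl (by omega), mul_zero]
        · simp
      rwa [hv, Pi.zero_apply, eq_comm] at hr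
  · intro hv
    funext r
    simp only [mulVec, dotProduct, Pi.zero_apply]
    refine Finset.sum_eq_zero fun y _ => ?_
    by_cases hP : prodFactors (Lmat N m lam) lam k r y = 0
    · rw [hP, zero_mul]
    · rw [hv y (not_lt.2 (prodFactors_Lmat_apply_ne_zero lam hP).2.1), mul_zero]

end Lmat

theorem card_sigma_fst_lt {N : ℕ} (m : ℕ → ℕ) {k : ℕ} (hkN : k ≤ N) :
    Fintype.card {y : (i : Fin N) × Fin (m i) // (y.1 : ℕ) < k} = ∑ j ∈ Finset.range k, m j := by
  rw [Fintype.card_congr (Equiv.subtypeSigmaEquiv (fun i : Fin N => Fin (m i)) (· < k)),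
    Fintype.card_sigma, ← Fin.sum_univ_eq_sum_range]
  simp only [Fintype.card_fin]
  exact Fintype.sum_equiv ⟨fun i => ⟨i.1, i.2⟩, fun j => ⟨Fin.castLE hkN j, j.2⟩,
    fun _ => rfl, fun _ => rfl⟩ _ _ fun _ => rfl

theorem stmt_13_general (N : ℕ) (m : ℕ → ℕ) (lam : ℕ → ℂ)
    (hmono : ∀ i j, i ≤ j → j < N → m j ≤ m i)
    (k : ℕ) (hkN : k ≤ N) :
    Module.finrank ℂ
        (LinearMap.ker (prodFactors (Lmat N m lam) lam k).mulVecLin) =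
      ∑ j ∈ Finset.range k, m j := by
  have hker : LinearMap.ker (prodFactors (Lmat N m lam) lam k).mulVecLin =
      ⨅ (y) (_ : ¬ (y.1 : ℕ) < k), LinearMap.ker (LinearMap.proj y) := by
    ext v
    simp only [LinearMap.mem_ker, Submodule.mem_iInf, LinearMap.proj_apply, mulVecLin_apply]
    exact mulVec_prodFactors_Lmat_eq_zero_iff lam hmono k v
  rw [hker, LinearMap.finrank_iInf_ker_proj, card_sigma_fst_lt m hkN]

/-- For a non-increasing sequence `m_1 ≥ ⋯ ≥ m_N > 0` and every
`k ∈ {1,…,N}`, the kernel of `(L(m;λ) − λ_1 I)⋯(L(m;λ) − λ_k I)` has dimension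
`m_1 + ⋯ + m_k`. -/
theorem stmt_13 (N : ℕ) (m : ℕ → ℕ) (lam : ℕ → ℂ)
    (hpos : ∀ i < N, 0 < m i) (hmono : ∀ i j, i ≤ j → j < N → m j ≤ m i)
    (k : ℕ) (hk1 : 1 ≤ k) (hkN : k ≤ N) :
    Module.finrank ℂ
        (LinearMap.ker (prodFactors (Lmat N m lam) lam k).mulVecLin) =
      ∑ j ∈ Finset.range k, m j :=
  stmt_13_general N m lam hmono k hkN
end

section
/- Let p ≥ 1, n ≥ 1, and for each j = 0,…,p let m_{j,1},…,m_{j,n_j} be non-negative integers with m_{j,1}+⋯+m_{j,n_j} = n, and let τ_j ∈ {1,…,n_j} satisfy m_{j,τ_j} ≥ m_{j,ν} for all ν = 1,…,n_j. If the index of rigidity equals 2, that is ∑_{j=0}^p ∑_{ν=1}^{n_j} m_{j,ν}² − (p−1)n² = 2, then d_max(𝐦) := ∑_{j=0}^p m_{j,τ_j} − (p−1)n > 0. -/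
/-! Each partition satisfies `∑_ν m_{j,ν}² ≤ m_{j,τ_j} · ∑_ν m_{j,ν} = m_{j,τ_j} n`, since every part
is at most the maximal one. Summing over `j` gives `idx 𝐦 ≤ d_max(𝐦) · n`, so `2 ≤ d_max(𝐦) · n`
with `n ≥ 0` forces `d_max(𝐦) > 0`. -/

open Finset

theorem Finset.sum_sq_le_mul_sum_of_le {ι R : Type*} [CommSemiring R] [PartialOrder R]
    [IsOrderedRing R] (s : Finset ι) (f : ι → R) (M : R) (hf : ∀ i ∈ s, 0 ≤ f i)
    (hM : ∀ i ∈ s, f i ≤ M) : ∑ i ∈ s, f i ^ 2 ≤ M * ∑ i ∈ s, f i := by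
  rw [mul_sum]
  gcongr with i hi
  rw [sq]
  exact mul_le_mul_of_nonneg_right (hM i hi) (hf i hi)

theorem rigidityIndex_le_dTau_mul {p n : ℕ} {nn : Fin (p + 1) → ℕ} (m : (j : Fin (p + 1)) → Fin (nn j) → ℕ)
    (hsum : ∀ j, ∑ ν, m j ν = n) (τ : (j : Fin (p + 1)) → Fin (nn j))
    (hτ : ∀ j ν, m j ν ≤ m j (τ j)) :
    (∑ j, ∑ ν, (m j ν : ℤ) ^ 2) - ((p : ℤ) - 1) * (n : ℤ) ^ 2
      ≤ ((∑ j, (m j (τ j) : ℤ)) - ((p : ℤ) - 1) * (n : ℤ)) * n := by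
  have hrow : ∀ j, ∑ ν, (m j ν : ℤ) ^ 2 ≤ (m j (τ j) : ℤ) * n := fun j => by
    have := sum_sq_le_mul_sum_of_le univ (fun ν => (m j ν : ℤ)) (m j (τ j))
      (fun ν _ => Nat.cast_nonneg _) (fun ν _ => Nat.cast_le.mpr (hτ j ν))
    rwa [← Nat.cast_sum, hsum j] at this
  have htotal : ∑ j, ∑ ν, (m j ν : ℤ) ^ 2 ≤ (∑ j, (m j (τ j) : ℤ)) * n := by
    rw [sum_mul]
    exact sum_le_sum fun j _ => hrow j
  linarith

theorem stmt_16_general (p : ℕ) (n : ℕ) (nn : Fin (p + 1) → ℕ)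
    (m : (j : Fin (p + 1)) → Fin (nn j) → ℕ)
    (hsum : ∀ j, ∑ ν, m j ν = n)
    (τ : (j : Fin (p + 1)) → Fin (nn j))
    (hτ : ∀ j ν, m j ν ≤ m j (τ j))
    (hidx : (∑ j, ∑ ν, (m j ν : ℤ) ^ 2) - ((p : ℤ) - 1) * (n : ℤ) ^ 2 = 2) :
    0 < (∑ j, (m j (τ j) : ℤ)) - ((p : ℤ) - 1) * (n : ℤ) := by
  have h := rigidityIndex_le_dTau_mul m hsum τ hτ
  rw [hidx] at h
  exact pos_of_mul_pos_left (by linarith) (Nat.cast_nonneg n)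

/-- For a tuple `𝐦 = (m_{j,ν})` of `p+1` partitions of `n ≥ 1` with
`τ_j` choosing a maximal part of the `j`-th partition: if the index of rigidity is `2`,
i.e. `∑_{j,ν} m_{j,ν}² − (p−1)n² = 2`, then `d_max(𝐦) = ∑_j m_{j,τ_j} − (p−1)n > 0`. -/
theorem stmt_16 (p : ℕ) (hp : 1 ≤ p) (n : ℕ) (hn : 1 ≤ n) (nn : Fin (p + 1) → ℕ)
    (m : (j : Fin (p + 1)) → Fin (nn j) → ℕ)
    (hsum : ∀ j, ∑ ν, m j ν = n)
    (τ : (j : Fin (p + 1)) → Fin (nn j))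
    (hτ : ∀ j ν, m j ν ≤ m j (τ j))
    (hidx : (∑ j, ∑ ν, (m j ν : ℤ) ^ 2) - ((p : ℤ) - 1) * (n : ℤ) ^ 2 = 2) :
    0 < (∑ j, (m j (τ j) : ℤ)) - ((p : ℤ) - 1) * (n : ℤ) :=
  stmt_16_general p n nn m hsum τ hτ hidx
end
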